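/- arXiv:2511.01309 — 4 statements merged into one kernel-verified Lean document; each statement's English description precedes it below -/
import Mathlib

section
/- Let m ≥ 1, Tr the absolute trace of 𝔽_{2^m} over 𝔽_2, d a positive integer, and a, b ∈ 𝔽_{2^m}. Define S₃ = Σ_{x ∈ 𝔽_{2^m}^*} Σ_{y ∈ 𝔽_{2^m}} (−1)^{Tr(x^{d+1} y + x^d y + x) + Tr(a x^d y + b x)}. Then: S₃ = 0 if a = 1; if a = 0 and b ≠ 0 then S₃ = 2^m if Tr(b+1) = 0 and S₃ = −2^m if Tr(b+1) = 1; and if a ∉ {0,1} then S₃ = 2^m if Tr((a+1)(b+1)) = 0 and S₃ = −2^m if Tr((a+1)(b+1)) = 1. -/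
/-! Writing the exponent as `(b + 1) x + x^d (x + a + 1) y`, the inner sum over `y` is a complete
character sum: it equals `2^m` when `x^d (x + a + 1) = 0` and vanishes otherwise. For `x ≠ 0` this
happens only at `x = a + 1`, which is an admissible `x` exactly when `a ≠ 1`, and then
`S₃ = 2^m (-1)^{Tr((a + 1)(b + 1))}`. -/

open Finset
open scoped Classical

variable {F : Type*} [Field F] [Fintype F] [Algebra (ZMod 2) F]

noncomputable def Tr (z : F) : ZMod 2 := Algebra.trace (ZMod 2) F z

noncomputable def chi (z : F) : ℤ := (-1) ^ (Tr z).val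

noncomputable def S3 (d : ℕ) (a b : F) : ℤ :=
  ∑ x ∈ univ.filter (fun x : F => x ≠ 0), ∑ y : F,
    chi (x ^ (d + 1) * y + x ^ d * y + x) * chi (a * x ^ d * y + b * x)

omit [Fintype F] in
theorem charP_two_of_algebra : CharP F 2 :=
  charP_of_injective_algebraMap (algebraMap (ZMod 2) F).injective 2

theorem neg_one_pow_val_add (s t : ZMod 2) :
    (-1 : ℤ) ^ (s + t).val = (-1) ^ s.val * (-1) ^ t.val := by
  revert s t; decide

omit [Fintype F] in
theorem chi_add (u v : F) : chi (u + v) = chi u * chi v := by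
  simp only [chi, Tr, map_add, neg_one_pow_val_add]

omit [Fintype F] in
theorem chi_of_tr_eq_zero {z : F} (h : Tr z = 0) : chi z = 1 := by
  simp [chi, h]

omit [Fintype F] in
theorem chi_of_tr_eq_one {z : F} (h : Tr z = 1) : chi z = -1 := by
  simp [chi, h, ZMod.val_one]

theorem sum_chi : ∑ y : F, chi y = 0 := by
  have : FiniteDimensional (ZMod 2) F := Module.Finite.of_finite
  obtain ⟨t, ht⟩ := Algebra.trace_surjective (ZMod 2) F 1
  -- shifting by an element of trace 1 negates the sum
  have hshift : ∑ y : F, chi (y + t) = ∑ y : F, chi y :=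
    Fintype.sum_equiv (Equiv.addRight t) _ _ fun _ => rfl
  simp only [chi_add, chi_of_tr_eq_one ht, ← sum_mul] at hshift
  linarith

theorem sum_chi_mul (c : F) :
    ∑ y : F, chi (c * y) = if c = 0 then (Fintype.card F : ℤ) else 0 := by
  split_ifs with hc
  · simp [hc, chi_of_tr_eq_zero (z := (0 : F)) (by simp [Tr])]
  · rw [← sum_chi (F := F)]
    exact Fintype.sum_equiv (Equiv.mulLeft₀ c hc) _ _ fun _ => rfl

theorem S3_eq (d : ℕ) (a b : F) :
    S3 d a b = if a = 1 then 0 else (Fintype.card F : ℤ) * chi ((a + 1) * (b + 1)) := by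
  have := charP_two_of_algebra (F := F)
  have hsplit : ∀ x y : F,
      chi (x ^ (d + 1) * y + x ^ d * y + x) * chi (a * x ^ d * y + b * x) =
        chi ((b + 1) * x) * chi (x ^ d * (x + (a + 1)) * y) := fun x y => by
    rw [← chi_add, ← chi_add]; congr 1; ring
  have hroot : ∀ x ∈ univ.filter (fun x : F => x ≠ 0),
      (chi ((b + 1) * x) * if x ^ d * (x + (a + 1)) = 0 then (Fintype.card F : ℤ) else 0) =
        if a + 1 = x then (Fintype.card F : ℤ) * chi ((a + 1) * (b + 1)) else 0 := by
    intro x hxmem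
    have hx : x ≠ 0 := (mem_filter.mp hxmem).2
    -- in characteristic 2, `x + (a + 1) = 0` means `x = a + 1`
    simp only [mul_eq_zero, pow_eq_zero_iff', hx, false_and, false_or, add_eq_zero_iff_eq_neg,
      CharTwo.neg_eq, eq_comm (a := a + 1)]
    split_ifs with h
    · rw [h, mul_comm, mul_comm (b + 1)]
    · rw [mul_zero]
  simp only [S3, hsplit, ← mul_sum, sum_chi_mul]
  rw [sum_congr rfl hroot, sum_ite_eq]
  simp only [mem_filter, mem_univ, true_and, ne_eq, add_eq_zero_iff_eq_neg, CharTwo.neg_eq,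
    ite_not]

theorem stmt4_general (m d : ℕ) (hF : Fintype.card F = 2 ^ m)
    (a b : F) :
    (a = 1 → S3 d a b = 0) ∧
    (a = 0 → b ≠ 0 →
      ((Tr (b + 1) = 0 → S3 d a b = (2 ^ m : ℤ)) ∧
       (Tr (b + 1) = 1 → S3 d a b = -(2 ^ m : ℤ)))) ∧
    (a ≠ 0 → a ≠ 1 →
      ((Tr ((a + 1) * (b + 1)) = 0 → S3 d a b = (2 ^ m : ℤ)) ∧
       (Tr ((a + 1) * (b + 1)) = 1 → S3 d a b = -(2 ^ m : ℤ)))) := by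
  have hgeneric : a ≠ 1 →
      (Tr ((a + 1) * (b + 1)) = 0 → S3 d a b = (2 ^ m : ℤ)) ∧
      (Tr ((a + 1) * (b + 1)) = 1 → S3 d a b = -(2 ^ m : ℤ)) := fun ha => by
    rw [S3_eq, if_neg ha, hF]
    exact ⟨fun h => by simp [chi_of_tr_eq_zero h], fun h => by simp [chi_of_tr_eq_one h]⟩
  refine ⟨fun ha => by rw [S3_eq, if_pos ha], fun ha _ => ?_, fun _ => hgeneric⟩
  subst ha
  simpa using hgeneric zero_ne_one

theorem stmt4 (m d : ℕ) (hm : 1 ≤ m) (hd : 1 ≤ d) (hF : Fintype.card F = 2 ^ m)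
    (a b : F) :
    (a = 1 → S3 d a b = 0) ∧
    (a = 0 → b ≠ 0 →
      ((Tr (b + 1) = 0 → S3 d a b = (2 ^ m : ℤ)) ∧
       (Tr (b + 1) = 1 → S3 d a b = -(2 ^ m : ℤ)))) ∧
    (a ≠ 0 → a ≠ 1 →
      ((Tr ((a + 1) * (b + 1)) = 0 → S3 d a b = (2 ^ m : ℤ)) ∧
       (Tr ((a + 1) * (b + 1)) = 1 → S3 d a b = -(2 ^ m : ℤ)))) :=
  stmt4_general m d hF a b
end

section
/- Let m ≥ 2, Tr the absolute trace of 𝔽_{2^m} over 𝔽_2, and d a positive integer. Then the set D₂ = { (x,y) ∈ 𝔽_{2^m}^* × 𝔽_{2^m}^* : Tr(x^{d+2} y + x^{d+1} y) = 0 } has cardinality 2^{2m−1} − 2^m + 1. -/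
open Finset
open scoped Classical

variable {F : Type*} [Field F] [Fintype F] [Algebra (ZMod 2) F]

noncomputable def D2 (F : Type*) [Field F] [Fintype F] [Algebra (ZMod 2) F] (d : ℕ) :
    Finset (F × F) :=
  univ.filter fun q => q.1 ≠ 0 ∧ q.2 ≠ 0 ∧
    Tr (q.1 ^ (d + 2) * q.2 + q.1 ^ (d + 1) * q.2) = 0

noncomputable def wt2 (d : ℕ) (a b : F) : ℕ :=
  ((D2 F d).filter fun q => Tr (a * q.1 ^ d * q.2 + b * q.1) = 1).card

lemma Tr_add (x y : F) : Tr (x + y) = Tr x + Tr y := map_add _ x y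

lemma card_tr_zero (m : ℕ) (hm : 1 ≤ m) (hF : Fintype.card F = 2 ^ m) :
    (univ.filter fun z : F => Tr z = 0).card = 2 ^ (m - 1) := by
  haveI : CharP F 2 := charP_of_injective_algebraMap (algebraMap (ZMod 2) F).injective 2
  obtain ⟨z₁, hz₁⟩ := Algebra.trace_surjective (ZMod 2) F 1
  have hz : Tr z₁ = 1 := hz₁
  have hAB : (univ.filter fun z : F => Tr z = 0).card
      = (univ.filter fun z : F => ¬ Tr z = 0).card := by
    apply Finset.card_bij (fun y _ => y + z₁)
    · intro y hy
      simp only [mem_filter, mem_univ, true_and] at hy ⊢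
      rw [Tr_add, hy, hz]
      decide
    · intro y hy y' hy' h
      exact add_right_cancel h
    · intro b hb
      simp only [mem_filter, mem_univ, true_and] at hb
      refine ⟨b + z₁, ?_, ?_⟩
      · simp only [mem_filter, mem_univ, true_and]
        rw [Tr_add, hz]
        have h1 : ∀ t : ZMod 2, t ≠ 0 → t = 1 := by decide
        rw [h1 _ hb]; decide
      · rw [add_assoc, CharTwo.add_self_eq_zero, add_zero]
  have htot : (univ.filter fun z : F => Tr z = 0).card
      + (univ.filter fun z : F => ¬ Tr z = 0).card = 2 ^ m := by
    rw [Finset.card_filter_add_card_filter_not, ← hF]; rfl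
  have hpow : 2 ^ m = 2 * 2 ^ (m - 1) := by
    conv_lhs => rw [show m = (m - 1) + 1 by omega]
    ring
  omega

lemma card_y (m : ℕ) (hm : 1 ≤ m) (hF : Fintype.card F = 2 ^ m) {c : F} (hc : c ≠ 0) :
    (univ.filter fun y : F => y ≠ 0 ∧ Tr (c * y) = 0).card = 2 ^ (m - 1) - 1 := by
  have h1 : (univ.filter fun y : F => y ≠ 0 ∧ Tr (c * y) = 0).card
      = (univ.filter fun z : F => z ≠ 0 ∧ Tr z = 0).card := by
    apply Finset.card_bij (fun y _ => c * y)
    · intro y hy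
      simp only [mem_filter, mem_univ, true_and] at hy ⊢
      exact ⟨mul_ne_zero hc hy.1, hy.2⟩
    · intro y hy y' hy' h
      exact mul_left_cancel₀ hc h
    · intro b hb
      simp only [mem_filter, mem_univ, true_and] at hb
      refine ⟨c⁻¹ * b, ?_, ?_⟩
      · simp only [mem_filter, mem_univ, true_and]
        constructor
        · exact mul_ne_zero (inv_ne_zero hc) hb.1
        · rw [← mul_assoc, mul_inv_cancel₀ hc, one_mul]; exact hb.2
      · rw [← mul_assoc, mul_inv_cancel₀ hc, one_mul]
  rw [h1]
  have h2 : (univ.filter fun z : F => z ≠ 0 ∧ Tr z = 0)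
      = (univ.filter fun z : F => Tr z = 0).erase 0 := by
    ext z; simp [mem_erase, and_comm]
  rw [h2, Finset.card_erase_of_mem, card_tr_zero m hm hF]
  exact Finset.mem_filter.mpr ⟨mem_univ _, map_zero _⟩

theorem stmt11 (m d : ℕ) (hm : 2 ≤ m) (hd : 1 ≤ d) (hF : Fintype.card F = 2 ^ m) :
    (D2 F d).card = 2 ^ (2 * m - 1) - 2 ^ m + 1 := by
  classical
  haveI : CharP F 2 := charP_of_injective_algebraMap (algebraMap (ZMod 2) F).injective 2
  set f : F → ℕ := fun x => (univ.filter fun y : F =>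
    x ≠ 0 ∧ y ≠ 0 ∧ Tr (x ^ (d + 2) * y + x ^ (d + 1) * y) = 0).card with hf
  have hsum : (D2 F d).card = ∑ x : F, f x := by
    rw [D2, Finset.card_filter]
    rw [Fintype.sum_prod_type]
    refine Finset.sum_congr rfl fun x _ => ?_
    simp only [hf, Finset.card_filter]
  have hf0 : f 0 = 0 := by
    simp [hf]
  have hf1 : f 1 = 2 ^ m - 1 := by
    have : ∀ y : F, (1:F) ^ (d + 2) * y + (1:F) ^ (d + 1) * y = 0 := by
      intro y; rw [one_pow, one_pow, one_mul, CharTwo.add_self_eq_zero]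
    simp only [hf, this]
    have htr0 : Tr (0 : F) = 0 := map_zero (Algebra.trace (ZMod 2) F)
    have he : (univ.filter fun y : F => (1:F) ≠ 0 ∧ y ≠ 0 ∧ Tr (0:F) = 0)
        = univ.erase 0 := by
      ext y; simp [htr0]
    rw [he, Finset.card_erase_of_mem (mem_univ 0), Finset.card_univ, hF]
  have hfx : ∀ x : F, x ≠ 0 → x ≠ 1 → f x = 2 ^ (m - 1) - 1 := by
    intro x hx0 hx1
    have hc : x ^ (d + 2) + x ^ (d + 1) ≠ 0 := by
      have : x ^ (d + 2) + x ^ (d + 1) = x ^ (d + 1) * (x + 1) := by ring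
      rw [this]
      apply mul_ne_zero (pow_ne_zero _ hx0)
      intro h
      apply hx1
      have : x = -1 := by linear_combination h
      rw [this, CharTwo.neg_eq]
    have heq : (univ.filter fun y : F =>
        x ≠ 0 ∧ y ≠ 0 ∧ Tr (x ^ (d + 2) * y + x ^ (d + 1) * y) = 0)
        = univ.filter fun y : F => y ≠ 0 ∧ Tr ((x ^ (d + 2) + x ^ (d + 1)) * y) = 0 := by
      apply Finset.filter_congr
      intro y _
      rw [add_mul]
      simp [hx0]
    rw [hf]
    simp only [heq]
    exact card_y m (by omega) hF hc
  have h01 : ({0, 1} : Finset F) ⊆ univ := subset_univ _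
  have hsplit : ∑ x : F, f x = ∑ x ∈ univ \ {0, 1}, f x + ∑ x ∈ ({0, 1} : Finset F), f x :=
    (Finset.sum_sdiff h01).symm
  have hpair : ∑ x ∈ ({0, 1} : Finset F), f x = f 0 + f 1 :=
    Finset.sum_pair zero_ne_one
  have hcard01 : ({0, 1} : Finset F).card = 2 := by
    rw [Finset.card_insert_of_notMem (by simp), Finset.card_singleton]
  have hconst : ∑ x ∈ univ \ ({0, 1} : Finset F), f x
      = (2 ^ m - 2) * (2 ^ (m - 1) - 1) := by
    rw [Finset.sum_congr rfl (fun x hx => ?_), Finset.sum_const, smul_eq_mul,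
      Finset.card_sdiff_of_subset h01, Finset.card_univ, hF, hcard01]
    · simp only [Finset.mem_sdiff, Finset.mem_insert, Finset.mem_singleton] at hx
      push_neg at hx
      exact hfx x hx.2.1 hx.2.2
  rw [hsum, hsplit, hpair, hf0, hf1, hconst]
  have ha : 2 ≤ 2 ^ (m - 1) := by
    calc 2 = 2 ^ 1 := rfl
    _ ≤ 2 ^ (m - 1) := Nat.pow_le_pow_right (by norm_num) (by omega)
  have h2m : 2 ^ m = 2 * 2 ^ (m - 1) := by
    rw [← pow_succ']; congr 1; omega
  have h2m1 : 2 ^ (2 * m - 1) = 2 * 2 ^ (m - 1) * 2 ^ (m - 1) := by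
    rw [show 2 * m - 1 = m + (m - 1) by omega, pow_add, h2m]
  set a := 2 ^ (m - 1) with haa
  rw [h2m1, h2m]
  zify [show 1 ≤ a by omega, show 2 ≤ 2 * a by omega, show 1 ≤ 2 * a by omega,
    show 2 * a ≤ 2 * a * a by nlinarith]
  ring
end

section
/- Let m ≥ 3 be odd, d a positive integer, Tr the absolute trace of 𝔽_{2^m} over 𝔽_2, and D₁ = { (x,y) ∈ 𝔽_{2^m}^* × 𝔽_{2^m} : Tr(x^{d+1} y + x^d y + x) = 0 }. For (a,b) ∈ 𝔽_{2^m}² with (a,b) ≠ (0,0), the Hamming weight of the codeword c(a,b) = (Tr(a x^d y + b x))_{(x,y) ∈ D₁} equals: 2^{m−2}(2^m − 3) if a ∉ {0,1} and Tr((a+1)(b+1)) = 0; 2^{m−1}(2^{m−1} − 1) if a = 1, or if a = 0, b ≠ 0 and Tr(b+1) = 0; 2^{m−2}(2^m − 1) if a ∉ {0,1} and Tr((a+1)(b+1)) = 1; and 2^{2m−2} if a = 0, b ≠ 0 and Tr(b+1) = 1. -/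
open Finset
open scoped Classical

variable {F : Type*} [Field F] [Fintype F] [Algebra (ZMod 2) F]

noncomputable def D1 (F : Type*) [Field F] [Fintype F] [Algebra (ZMod 2) F] (d : ℕ) :
    Finset (F × F) :=
  univ.filter fun q => q.1 ≠ 0 ∧ Tr (q.1 ^ (d + 1) * q.2 + q.1 ^ d * q.2 + q.1) = 0

noncomputable def wt1 (d : ℕ) (a b : F) : ℕ :=
  ((D1 F d).filter fun q => Tr (a * q.1 ^ d * q.2 + b * q.1) = 1).card

/-!
Count the support of the codeword fibre by fibre over `x`. The fibre over `x = 0` is excluded by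
definition and the one over `x = 1` is empty because `Tr 1 = 1` for odd `m`. For `x ∉ {0, 1}`
the fibre is the solution set of the two `𝔽₂`-linear equations `Tr (u y) = Tr x` and
`Tr (v y) = 1 + Tr (b x)`, where `u = x^d (x+1) ≠ 0` and `v = a x^d`. As the trace is surjective,
the functionals `y ↦ Tr (u y)` and `y ↦ Tr (v y)` are independent unless `v = 0` or `v = u`, so
a generic fibre has `2^(m-2)` points. The degenerate cases are `v = 0` (every fibre, when
`a = 0`) and `v = u` (the fibre `x = a + 1`); such a fibre has `2^(m-1)` or `0` points according
to `Tr (b x)`, resp. `Tr ((a+1)(b+1))`. Summing over `x` gives the four weights.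
-/

lemma AddMonoidHom.card_fiber_mul_card_of_surjective {G M : Type*} [AddGroup G] [Fintype G]
    [AddMonoid M] [Fintype M] [DecidableEq M] (f : G →+ M) (hf : Function.Surjective f)
    (x : M) : #{g | f g = x} * Fintype.card M = Fintype.card G := by
  have h := card_eq_sum_card_fiberwise (f := f) (s := univ) (t := univ) fun _ _ ↦ mem_univ _
  rw [card_univ] at h
  rw [h, sum_congr rfl fun y _ ↦ card_fiber_eq_of_mem_range f (hf y) (hf x), sum_const, card_univ,
    smul_eq_mul, mul_comm]

instance : CharP F 2 := charP_of_injective_algebraMap (algebraMap (ZMod 2) F).injective 2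

lemma Tr_add_s13 {K : Type*} [Field K] [Algebra (ZMod 2) K] (x y : K) : Tr (x + y) = Tr x + Tr y :=
  map_add _ x y

lemma Tr_zero {K : Type*} [Field K] [Algebra (ZMod 2) K] : Tr (0 : K) = 0 := map_zero _

lemma Tr_one_of_odd {m : ℕ} (hmo : Odd m) (hF : Fintype.card F = 2 ^ m) : Tr (1 : F) = 1 := by
  have hrank : Module.finrank (ZMod 2) F = m := by
    have := Module.card_eq_pow_finrank (K := ZMod 2) (V := F)
    rw [hF, ZMod.card] at this
    exact Nat.pow_right_injective le_rfl this.symm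
  rw [Tr, ← map_one (algebraMap (ZMod 2) F), Algebra.trace_algebraMap, hrank, nsmul_eq_mul,
    mul_one, ZMod.natCast_eq_one_iff_odd]
  exact hmo

lemma exists_Tr_mul_eq_one {u : F} (hu : u ≠ 0) : ∃ y, Tr (u * y) = 1 := by
  obtain ⟨z, hz⟩ := Algebra.trace_surjective (ZMod 2) F 1
  exact ⟨u⁻¹ * z, by rw [mul_inv_cancel_left₀ hu]; exact hz⟩

lemma exists_Tr_mul_eq_one_and_eq_zero {u v : F} (hu : u ≠ 0) (huv : u ≠ v) :
    ∃ y, Tr (u * y) = 1 ∧ Tr (v * y) = 0 := by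
  obtain ⟨y₁, h₁⟩ := exists_Tr_mul_eq_one hu
  obtain ⟨y₂, h₂⟩ := exists_Tr_mul_eq_one (mt CharTwo.add_eq_zero.mp huv)
  rw [add_mul, Tr_add_s13] at h₂
  have key : ∀ p q r s : ZMod 2, p = 1 → r + s = 1 →
      (p = 1 ∧ q = 0) ∨ (r = 1 ∧ s = 0) ∨ (p + r = 1 ∧ q + s = 0) := by decide
  rcases key _ (Tr (v * y₁)) _ _ h₁ h₂ with h | h | h
  · exact ⟨y₁, h⟩
  · exact ⟨y₂, h⟩
  · exact ⟨y₁ + y₂, by simpa only [mul_add, Tr_add_s13] using h⟩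

noncomputable def traceMulHom (u : F) : F →+ ZMod 2 :=
  (Algebra.trace (ZMod 2) F).toAddMonoidHom.comp (AddMonoidHom.mulLeft u)

lemma traceMulHom_apply {K : Type*} [Field K] [Algebra (ZMod 2) K] (u y : K) :
    traceMulHom u y = Tr (u * y) :=
  rfl

lemma traceMulHom_surjective {u : F} (hu : u ≠ 0) : Function.Surjective (traceMulHom u) := by
  obtain ⟨y, hy⟩ := exists_Tr_mul_eq_one hu
  intro s
  fin_cases s
  · exact ⟨0, map_zero _⟩
  · exact ⟨y, hy⟩

lemma traceMulHom_prod_surjective {u v : F} (hu : u ≠ 0) (hv : v ≠ 0) (huv : u ≠ v) :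
    Function.Surjective ((traceMulHom u).prod (traceMulHom v)) := by
  obtain ⟨y, hy⟩ := exists_Tr_mul_eq_one_and_eq_zero hu huv
  obtain ⟨z, hz⟩ := exists_Tr_mul_eq_one_and_eq_zero hv huv.symm
  have hy' : (traceMulHom u).prod (traceMulHom v) y = (1, 0) := Prod.ext hy.1 hy.2
  have hz' : (traceMulHom u).prod (traceMulHom v) z = (0, 1) := Prod.ext hz.2 hz.1
  rintro ⟨s, t⟩
  fin_cases s <;> fin_cases t
  · exact ⟨0, map_zero _⟩
  · exact ⟨z, hz'⟩
  · exact ⟨y, hy'⟩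
  · exact ⟨y + z, by rw [map_add, hy', hz']; rfl⟩

lemma card_Tr_mul_eq {u : F} (hu : u ≠ 0) (s : ZMod 2) :
    #{y | Tr (u * y) = s} * 2 = Fintype.card F :=
  (traceMulHom u).card_fiber_mul_card_of_surjective (traceMulHom_surjective hu) s

lemma card_Tr_mul_eq_and_Tr_mul_eq {u v : F} (hu : u ≠ 0) (hv : v ≠ 0) (huv : u ≠ v)
    (s t : ZMod 2) : #{y | Tr (u * y) = s ∧ Tr (v * y) = t} * 4 = Fintype.card F := by
  have := ((traceMulHom u).prod (traceMulHom v)).card_fiber_mul_card_of_surjective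
    (traceMulHom_prod_surjective hu hv huv) (s, t)
  simpa only [AddMonoidHom.prod_apply, traceMulHom_apply, Prod.ext_iff, Fintype.card_prod,
    ZMod.card] using this

noncomputable def fiberCount (d : ℕ) (a b x : F) : ℕ :=
  #{y | Tr (x ^ d * (x + 1) * y) = Tr x ∧ Tr (a * x ^ d * y) = 1 + Tr (b * x)}

lemma wt1_eq_sum_fiberCount (hTr1 : Tr (1 : F) = 1) (d : ℕ) (a b : F) :
    wt1 d a b = ∑ x ∈ ({0, 1} : Finset F)ᶜ, fiberCount d a b x := by
  have hfiber : ∀ x : F, #{y | (x ≠ 0 ∧ Tr (x ^ (d + 1) * y + x ^ d * y + x) = 0) ∧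
      Tr (a * x ^ d * y + b * x) = 1} =
      if x ∈ ({0, 1} : Finset F)ᶜ then fiberCount d a b x else 0 := by
    intro x
    split_ifs with hx <;> rw [mem_compl, mem_insert, mem_singleton, not_or] at hx
    · rw [fiberCount]
      congr 1
      refine filter_congr fun y _ ↦ ?_
      rw [show x ^ (d + 1) * y + x ^ d * y + x = x ^ d * (x + 1) * y + x by ring, Tr_add_s13, Tr_add_s13,
        CharTwo.add_eq_zero, CharTwo.add_eq_iff_eq_add, and_iff_right hx.1]
    · rw [card_eq_zero, filter_eq_empty_iff]
      rintro y - ⟨⟨hx0, h⟩, -⟩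
      obtain rfl : x = 1 := by tauto
      simp only [one_pow, one_mul, CharTwo.add_self_eq_zero, zero_add, hTr1] at h
      exact one_ne_zero h
  rw [wt1, D1, filter_filter, card_filter, Fintype.sum_prod_type]
  simp only [← card_filter, hfiber, sum_ite_mem, univ_inter]

section FiberCount

variable {q : ℕ} {d : ℕ} {a b x : F}

lemma fiberCount_of_ne (hq : Fintype.card F = 4 * q) (ha : a ≠ 0) (hx0 : x ≠ 0) (hx1 : x ≠ 1)
    (hxa : x ≠ a + 1) :
    fiberCount d a b x = q := by
  have hxd : x ^ d ≠ 0 := pow_ne_zero d hx0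
  have hu : x ^ d * (x + 1) ≠ 0 := mul_ne_zero hxd (mt CharTwo.add_eq_zero.mp hx1)
  have huv : x ^ d * (x + 1) ≠ a * x ^ d := by
    rw [mul_comm a]
    exact fun h ↦ hxa (CharTwo.add_eq_iff_eq_add.mp (mul_left_cancel₀ hxd h))
  have := card_Tr_mul_eq_and_Tr_mul_eq hu (mul_ne_zero ha hxd) huv (Tr x) (1 + Tr (b * x))
  rw [fiberCount]
  omega

lemma fiberCount_zero_left (hq : Fintype.card F = 4 * q) (hx0 : x ≠ 0) (hx1 : x ≠ 1) :
    fiberCount d 0 b x = if Tr (b * x) = 1 then 2 * q else 0 := by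
  have hu : x ^ d * (x + 1) ≠ 0 :=
    mul_ne_zero (pow_ne_zero d hx0) (mt CharTwo.add_eq_zero.mp hx1)
  simp only [fiberCount, zero_mul, Tr_zero, eq_comm (a := (0 : ZMod 2)), CharTwo.add_eq_zero]
  split_ifs with hb
  · have := card_Tr_mul_eq hu (Tr x)
    rw [filter_congr fun y _ ↦ and_iff_left hb.symm]
    omega
  · rw [card_eq_zero, filter_eq_empty_iff]
    exact fun y _ h ↦ hb h.2.symm

lemma fiberCount_add_one (hq : Fintype.card F = 4 * q) (ha0 : a ≠ 0) (ha1 : a ≠ 1) :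
    fiberCount d a b (a + 1) = if Tr ((a + 1) * (b + 1)) = 1 then 2 * q else 0 := by
  have hu : (a + 1) ^ d * a ≠ 0 :=
    mul_ne_zero (pow_ne_zero d (mt CharTwo.add_eq_zero.mp ha1)) ha0
  have hTr : Tr ((a + 1) * (b + 1)) = Tr (a + 1) + Tr (b * (a + 1)) := by
    rw [← Tr_add_s13]
    ring_nf
  simp only [fiberCount, CharTwo.add_cancel_right, mul_comm a, hTr, CharTwo.add_eq_iff_eq_add]
  split_ifs with h
  · have := card_Tr_mul_eq hu (Tr (a + 1))
    simp only [← h, and_self]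
    omega
  · rw [card_eq_zero, filter_eq_empty_iff]
    rintro y - ⟨h₁, h₂⟩
    exact h (h₁ ▸ h₂)

end FiberCount

lemma mem_compl_zero_one {R : Type*} [Zero R] [One R] [Fintype R] {x : R} :
    x ∈ ({0, 1} : Finset R)ᶜ ↔ x ≠ 0 ∧ x ≠ 1 := by
  simp only [mem_compl, mem_insert, mem_singleton, not_or]

lemma card_compl_zero_one {R : Type*} [AddMonoidWithOne R] [NeZero (1 : R)] [Fintype R] :
    #({0, 1} : Finset R)ᶜ = Fintype.card R - 2 := by
  rw [card_compl, card_pair zero_ne_one]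

section Weights

variable {q : ℕ} (d : ℕ) {a b : F}

lemma wt1_one_left (hTr1 : Tr (1 : F) = 1) (hq : Fintype.card F = 4 * q) :
    wt1 d 1 b = (4 * q - 2) * q := by
  have hfiber : ∀ x ∈ ({0, 1} : Finset F)ᶜ, fiberCount d 1 b x = q := fun x hx ↦ by
    obtain ⟨hx0, hx1⟩ := mem_compl_zero_one.mp hx
    exact fiberCount_of_ne hq one_ne_zero hx0 hx1 (by rwa [CharTwo.add_self_eq_zero])
  rw [wt1_eq_sum_fiberCount hTr1, sum_congr rfl hfiber, sum_const, card_compl_zero_one, hq,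
    smul_eq_mul]

lemma wt1_zero_left (hTr1 : Tr (1 : F) = 1) (hq : Fintype.card F = 4 * q) (hb : b ≠ 0) :
    wt1 d 0 b = 4 * q * q - if Tr b = 1 then 2 * q else 0 := by
  set f : F → ℕ := fun x ↦ if Tr (b * x) = 1 then 2 * q else 0
  have hfiber : ∀ x ∈ ({0, 1} : Finset F)ᶜ, fiberCount d 0 b x = f x := fun x hx ↦ by
    obtain ⟨hx0, hx1⟩ := mem_compl_zero_one.mp hx
    exact fiberCount_zero_left hq hx0 hx1
  have hsum : ∑ x, f x = 4 * q * q := by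
    have hcard : #{x | Tr (b * x) = 1} = 2 * q := by have := card_Tr_mul_eq hb 1; omega
    rw [← sum_filter, sum_const, smul_eq_mul, hcard]
    ring
  have hsplit := sum_compl_add_sum ({0, 1} : Finset F) f
  have hf0 : f 0 = 0 := by simp only [f, mul_zero, Tr_zero, zero_ne_one, if_false]
  have hf1 : f 1 = if Tr b = 1 then 2 * q else 0 := by simp only [f, mul_one]
  rw [sum_pair zero_ne_one, hsum, hf0, hf1, zero_add] at hsplit
  rw [wt1_eq_sum_fiberCount hTr1, sum_congr rfl hfiber]
  exact Nat.eq_sub_of_add_eq hsplit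

lemma wt1_of_ne (hTr1 : Tr (1 : F) = 1) (hq : Fintype.card F = 4 * q) (ha0 : a ≠ 0)
    (ha1 : a ≠ 1) :
    wt1 d a b = (4 * q - 3) * q + if Tr ((a + 1) * (b + 1)) = 1 then 2 * q else 0 := by
  have hmem : a + 1 ∈ ({0, 1} : Finset F)ᶜ :=
    mem_compl_zero_one.mpr ⟨mt CharTwo.add_eq_zero.mp ha1,
      fun h ↦ ha0 (by rwa [CharTwo.add_eq_iff_eq_add, CharTwo.add_self_eq_zero] at h)⟩
  have hfiber : ∀ x ∈ (({0, 1} : Finset F)ᶜ).erase (a + 1), fiberCount d a b x = q :=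
    fun x hx ↦ by
      obtain ⟨hxa, hx⟩ := mem_erase.mp hx
      obtain ⟨hx0, hx1⟩ := mem_compl_zero_one.mp hx
      exact fiberCount_of_ne hq ha0 hx0 hx1 hxa
  rw [wt1_eq_sum_fiberCount hTr1, ← add_sum_erase _ _ hmem, fiberCount_add_one hq ha0 ha1,
    sum_congr rfl hfiber, sum_const, card_erase_of_mem hmem, card_compl_zero_one, hq, smul_eq_mul,
    add_comm, Nat.sub_sub]

end Weights

theorem stmt13_general (m d : ℕ) (hm : 3 ≤ m) (hmo : Odd m)
    (hF : Fintype.card F = 2 ^ m) (a b : F) :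
    (a ≠ 0 → a ≠ 1 → Tr ((a + 1) * (b + 1)) = 0 →
      wt1 d a b = 2 ^ (m - 2) * (2 ^ m - 3)) ∧
    ((a = 1 ∨ (a = 0 ∧ b ≠ 0 ∧ Tr (b + 1) = 0)) →
      wt1 d a b = 2 ^ (m - 1) * (2 ^ (m - 1) - 1)) ∧
    (a ≠ 0 → a ≠ 1 → Tr ((a + 1) * (b + 1)) = 1 →
      wt1 d a b = 2 ^ (m - 2) * (2 ^ m - 1)) ∧
    (a = 0 → b ≠ 0 → Tr (b + 1) = 1 → wt1 d a b = 2 ^ (2 * m - 2)) := by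
  have hTr1 : Tr (1 : F) = 1 := Tr_one_of_odd hmo hF
  have hTr_add_one (c : F) : Tr (c + 1) = Tr c + 1 := by rw [Tr_add_s13, hTr1]
  obtain ⟨k, rfl⟩ : ∃ k, m = k + 2 := ⟨m - 2, by omega⟩
  have hq : Fintype.card F = 4 * 2 ^ k := by rw [hF]; ring
  rw [Nat.add_sub_cancel, show k + 2 - 1 = k + 1 by omega,
    show 2 * (k + 2) - 2 = k + k + 2 by omega, show 2 ^ (k + 2) = 4 * 2 ^ k by ring,
    show 2 ^ (k + 1) = 2 * 2 ^ k by ring, show 2 ^ (k + k + 2) = 4 * 2 ^ k * 2 ^ k by ring]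
  have hq1 : 1 ≤ 2 ^ k := Nat.one_le_two_pow
  generalize 2 ^ k = q at hq hq1 ⊢
  have h1 : 1 ≤ 2 * q := by omega
  have h3 : 3 ≤ 4 * q := by omega
  have hqq : 2 * q ≤ 4 * q * q := by nlinarith
  refine ⟨fun ha0 ha1 hT ↦ ?_, ?_, fun ha0 ha1 hT ↦ ?_, ?_⟩
  · rw [wt1_of_ne d hTr1 hq ha0 ha1, hT, if_neg zero_ne_one, add_zero, mul_comm]
  · rintro (rfl | ⟨rfl, hb, hT⟩)
    · rw [wt1_one_left d hTr1 hq]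
      zify [h1, show 2 ≤ 4 * q by omega]
      ring
    · rw [hTr_add_one, CharTwo.add_eq_zero] at hT
      rw [wt1_zero_left d hTr1 hq hb, if_pos hT]
      zify [h1, hqq]
      ring
  · rw [wt1_of_ne d hTr1 hq ha0 ha1, if_pos hT]
    zify [h3, show 1 ≤ 4 * q by omega]
    ring
  · rintro rfl hb hT
    rw [hTr_add_one, add_eq_right] at hT
    rw [wt1_zero_left d hTr1 hq hb, hT, if_neg zero_ne_one, Nat.sub_zero]

theorem stmt13 (m d : ℕ) (hm : 3 ≤ m) (hmo : Odd m) (hd : 1 ≤ d)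
    (hF : Fintype.card F = 2 ^ m) (a b : F) (hab : (a, b) ≠ (0, 0)) :
    (a ≠ 0 → a ≠ 1 → Tr ((a + 1) * (b + 1)) = 0 →
      wt1 d a b = 2 ^ (m - 2) * (2 ^ m - 3)) ∧
    ((a = 1 ∨ (a = 0 ∧ b ≠ 0 ∧ Tr (b + 1) = 0)) →
      wt1 d a b = 2 ^ (m - 1) * (2 ^ (m - 1) - 1)) ∧
    (a ≠ 0 → a ≠ 1 → Tr ((a + 1) * (b + 1)) = 1 →
      wt1 d a b = 2 ^ (m - 2) * (2 ^ m - 1)) ∧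
    (a = 0 → b ≠ 0 → Tr (b + 1) = 1 → wt1 d a b = 2 ^ (2 * m - 2)) :=
  stmt13_general m d hm hmo hF a b
end

section
/- Let m ≥ 3 be odd and d a positive integer. The binary linear code C_{D₁} = { (Tr(a x^d y + b x))_{(x,y) ∈ D₁} : a, b ∈ 𝔽_{2^m} }, with D₁ = { (x,y) ∈ 𝔽_{2^m}^* × 𝔽_{2^m} : Tr(x^{d+1}y + x^d y + x) = 0 }, is a [2^m(2^{m−1} − 1), 2m, 2^{m−2}(2^m − 3)] code, and its weight distribution is: weight 2^{m−2}(2^m − 3) with frequency 2^m(2^{m−1} − 1); weight 2^{m−1}(2^{m−1} − 1) with frequency 3·2^{m−1}; weight 2^{m−2}(2^m − 1) with frequency 2^m(2^{m−1} − 1); weight 2^{2m−2} with frequency 2^{m−1} − 1. -/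
open Finset
open scoped Classical

set_option linter.unusedSectionVars false
set_option linter.unusedVariables false
set_option maxHeartbeats 1000000

variable {F : Type*} [Field F] [Fintype F] [Algebra (ZMod 2) F]

lemma two_zero : (2 : F) = 0 := by
  calc (2:F) = algebraMap (ZMod 2) F 2 := (map_ofNat _ 2).symm
  _ = algebraMap (ZMod 2) F 0 := by congr 1
  _ = 0 := map_zero _

lemma add_self_zero (x : F) : x + x = 0 := by
  have h := two_zero (F := F); linear_combination x * h

lemma Tr_zero_s14 : Tr (0 : F) = 0 := map_zero (Algebra.trace (ZMod 2) F)

lemma zmod2_elim (z : ZMod 2) : z = 0 ∨ z = 1 := by revert z; decide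

lemma zmod2_ne {z t : ZMod 2} : ¬(z = t) ↔ z = t + 1 := by revert z t; decide

lemma exists_tr_one {c : F} (hc : c ≠ 0) : ∃ y : F, Tr (c * y) = 1 := by
  have h2 : ringChar F = 2 :=
    CharP.ringChar_of_prime_eq_zero Nat.prime_two (two_zero)
  have key : ∀ (n : ℕ), ringChar F = n → ∀ (_ : Algebra (ZMod n) F),
      ∃ b : F, Algebra.trace (ZMod n) F (c * b) ≠ 0 := by
    rintro n rfl inst
    exact FiniteField.trace_to_zmod_nondegenerate F hc
  obtain ⟨b, hb⟩ := key 2 h2 ‹Algebra (ZMod 2) F›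
  refine ⟨b, ?_⟩
  rcases zmod2_elim (Tr (c * b)) with h | h
  · exact absurd h hb
  · exact h

lemma Tr_one (m : ℕ) (hmo : Odd m) (hF : Fintype.card F = 2 ^ m) : Tr (1 : F) = 1 := by
  have hfr : Module.finrank (ZMod 2) F = m := by
    have := Module.card_eq_pow_finrank (K := ZMod 2) (V := F)
    rw [ZMod.card, hF] at this
    exact (Nat.pow_right_injective (le_refl 2) this.symm)
  have h1 : Tr (1 : F) = Module.finrank (ZMod 2) F • (1 : ZMod 2) := by
    have := Algebra.trace_algebraMap (R := ZMod 2) (S := F) (1 : ZMod 2)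
    rw [map_one] at this
    exact this
  rw [h1, hfr, nsmul_eq_mul, mul_one]
  obtain ⟨k, hk⟩ := hmo
  subst hk
  push_cast
  have h2 : (2 : ZMod 2) = 0 := by decide
  rw [h2]; ring

lemma card_filter_prod (P : F × F → Prop) :
    (univ.filter P).card = ∑ x : F, (univ.filter fun y => P (x, y)).card := by
  rw [Finset.card_eq_sum_card_fiberwise (f := fun q : F × F => q.1) (t := univ)
    (fun x _ => mem_univ _)]
  refine Finset.sum_congr rfl fun x _ => ?_
  refine Finset.card_bij' (fun q _ => q.2) (fun y _ => (x, y)) ?_ ?_ ?_ ?_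
  · intro q hq; simp only [mem_filter, mem_univ, true_and] at hq ⊢
    rcases hq with ⟨h1, h2⟩; subst h2; exact h1
  · intro y hy; simp only [mem_filter, mem_univ, true_and] at hy ⊢; exact ⟨hy, trivial⟩
  · rintro ⟨q1, q2⟩ hq; simp only [mem_filter] at hq
    have : q1 = x := hq.2
    simp [this]
  · intro y hy; rfl

lemma card_tr_affine (m : ℕ) (hm : 1 ≤ m) (hF : Fintype.card F = 2 ^ m) {c : F} (hc : c ≠ 0)
    (e : F) (t : ZMod 2) :
    (univ.filter fun y : F => Tr (c * y + e) = t).card = 2 ^ (m - 1) := by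
  obtain ⟨y0, hy0⟩ := exists_tr_one hc
  have hbij : ∀ s : ZMod 2, (univ.filter fun y : F => Tr (c * y + e) = s).card
      = (univ.filter fun y : F => Tr (c * y + e) = s + 1).card := by
    intro s
    refine Finset.card_bij' (fun y _ => y + y0) (fun y _ => y + y0) ?_ ?_ ?_ ?_
    · intro y hy; simp only [mem_filter, mem_univ, true_and] at hy ⊢
      have : c * (y + y0) + e = (c * y + e) + c * y0 := by ring
      rw [this, Tr_add, hy, hy0]
    · intro y hy; simp only [mem_filter, mem_univ, true_and] at hy ⊢
      have : c * (y + y0) + e = (c * y + e) + c * y0 := by ring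
      rw [this, Tr_add, hy, hy0, add_assoc]
      have h11 : (1 : ZMod 2) + 1 = 0 := by decide
      rw [h11, add_zero]
    · intro y _; show y + y0 + y0 = y; rw [add_assoc, add_self_zero, add_zero]
    · intro y _; show y + y0 + y0 = y; rw [add_assoc, add_self_zero, add_zero]
  have hsplit : (univ.filter fun y : F => Tr (c * y + e) = t).card
      + (univ.filter fun y : F => Tr (c * y + e) = t + 1).card = 2 ^ m := by
    have base := Finset.card_filter_add_card_filter_not
      (s := (univ : Finset F)) (p := fun y : F => Tr (c * y + e) = t)
    have hneg : (univ : Finset F).filter (fun y : F => ¬ Tr (c * y + e) = t)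
        = univ.filter (fun y : F => Tr (c * y + e) = t + 1) := by
      apply Finset.filter_congr; intro y _; exact zmod2_ne
    rw [hneg, Finset.card_univ, hF] at base
    exact base
  have hp : 2 ^ m = 2 * 2 ^ (m - 1) := by
    rw [← pow_succ']; congr 1; omega
  have := hbij t
  omega

lemma card_tr_pair (m : ℕ) (hm : 2 ≤ m) (hF : Fintype.card F = 2 ^ m) {c1 c2 : F}
    (h1 : c1 ≠ 0) (h2 : c2 ≠ 0) (h12 : c1 ≠ c2) (e1 e2 : F) (t1 t2 : ZMod 2) :
    (univ.filter fun y : F => Tr (c1 * y + e1) = t1 ∧ Tr (c2 * y + e2) = t2).card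
      = 2 ^ (m - 2) := by
  have hm1 : 1 ≤ m := by omega
  set A : ZMod 2 → ZMod 2 → ℕ :=
    fun s t => (univ.filter fun y : F => Tr (c1 * y + e1) = s ∧ Tr (c2 * y + e2) = t).card
    with hA
  have hsum : c1 + c2 ≠ 0 := by
    intro h
    apply h12
    have : c1 = (c1 + c2) + c2 := by rw [add_assoc, add_self_zero, add_zero]
    rw [h, zero_add] at this; exact this
  -- row sums
  have row : ∀ s, A s 0 + A s 1 = 2 ^ (m - 1) := by
    intro s
    have base := Finset.card_filter_add_card_filter_not
      (s := univ.filter fun y : F => Tr (c1 * y + e1) = s)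
      (p := fun y : F => Tr (c2 * y + e2) = 0)
    rw [Finset.filter_filter, Finset.filter_filter] at base
    have hneg : (univ.filter fun y : F => Tr (c1 * y + e1) = s ∧ ¬ Tr (c2 * y + e2) = 0)
        = univ.filter fun y : F => Tr (c1 * y + e1) = s ∧ Tr (c2 * y + e2) = 1 := by
      apply Finset.filter_congr; intro y _
      constructor
      · rintro ⟨hy1, hy2⟩; exact ⟨hy1, zmod2_ne.mp hy2⟩
      · rintro ⟨hy1, hy2⟩; refine ⟨hy1, ?_⟩; rw [zmod2_ne]; exact hy2
    rw [hneg, card_tr_affine m hm1 hF h1 e1 s] at base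
    exact base
  have col : ∀ t, A 0 t + A 1 t = 2 ^ (m - 1) := by
    intro t
    have base := Finset.card_filter_add_card_filter_not
      (s := univ.filter fun y : F => Tr (c2 * y + e2) = t)
      (p := fun y : F => Tr (c1 * y + e1) = 0)
    rw [Finset.filter_filter, Finset.filter_filter] at base
    have h0 : (univ.filter fun y : F => Tr (c2 * y + e2) = t ∧ Tr (c1 * y + e1) = 0)
        = univ.filter fun y : F => Tr (c1 * y + e1) = 0 ∧ Tr (c2 * y + e2) = t := by
      apply Finset.filter_congr; intro y _; tauto
    have h1' : (univ.filter fun y : F => Tr (c2 * y + e2) = t ∧ ¬ Tr (c1 * y + e1) = 0)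
        = univ.filter fun y : F => Tr (c1 * y + e1) = 1 ∧ Tr (c2 * y + e2) = t := by
      apply Finset.filter_congr; intro y _
      constructor
      · rintro ⟨hy1, hy2⟩; exact ⟨zmod2_ne.mp hy2, hy1⟩
      · rintro ⟨hy1, hy2⟩; refine ⟨hy2, ?_⟩; rw [zmod2_ne]; exact hy1
    rw [h0, h1', card_tr_affine m hm1 hF h2 e2 t] at base
    exact base
  have hdiag : ∀ u : ZMod 2, A 0 u + A 1 (u + 1) = 2 ^ (m - 1) := by
    intro u
    have key : ∀ y : F, Tr ((c1 + c2) * y + (e1 + e2))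
        = Tr (c1 * y + e1) + Tr (c2 * y + e2) := by
      intro y
      rw [← Tr_add]; congr 1; ring
    have base := Finset.card_filter_add_card_filter_not
      (s := univ.filter fun y : F => Tr ((c1 + c2) * y + (e1 + e2)) = u)
      (p := fun y : F => Tr (c1 * y + e1) = 0)
    rw [Finset.filter_filter, Finset.filter_filter] at base
    have h0 : (univ.filter fun y : F =>
          Tr ((c1 + c2) * y + (e1 + e2)) = u ∧ Tr (c1 * y + e1) = 0)
        = univ.filter fun y : F => Tr (c1 * y + e1) = 0 ∧ Tr (c2 * y + e2) = u := by
      apply Finset.filter_congr; intro y _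
      rw [key y]
      constructor
      · rintro ⟨hy1, hy2⟩
        refine ⟨hy2, ?_⟩
        rw [hy2, zero_add] at hy1; exact hy1
      · rintro ⟨hy1, hy2⟩; rw [hy1, hy2, zero_add]; exact ⟨rfl, rfl⟩
    have h1'' : (univ.filter fun y : F =>
          Tr ((c1 + c2) * y + (e1 + e2)) = u ∧ ¬ Tr (c1 * y + e1) = 0)
        = univ.filter fun y : F => Tr (c1 * y + e1) = 1 ∧ Tr (c2 * y + e2) = u + 1 := by
      apply Finset.filter_congr; intro y _
      rw [key y]
      constructor
      · rintro ⟨hy1, hy2⟩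
        have h1' : Tr (c1 * y + e1) = 1 := (zmod2_ne.mp hy2)
        refine ⟨h1', ?_⟩
        rw [h1'] at hy1
        rcases zmod2_elim (Tr (c2 * y + e2)) with h | h <;>
          rcases zmod2_elim u with hu | hu <;> rw [h, hu] at hy1 ⊢ <;> revert hy1 <;> decide
      · rintro ⟨hy1, hy2⟩
        constructor
        · rw [hy1, hy2]
          rcases zmod2_elim u with hu | hu <;> rw [hu] <;> decide
        · rw [zmod2_ne]; exact hy1
    rw [h0, h1'', card_tr_affine m hm1 hF hsum (e1 + e2) u] at base
    exact base
  have hp : 2 ^ (m - 1) = 2 * 2 ^ (m - 2) := by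
    rw [← pow_succ']; congr 1; omega
  have r0 := row 0; have r1 := row 1; have c0 := col 0; have c1' := col 1
  have d0 := hdiag 0; have d1 := hdiag 1
  have e01 : (0 : ZMod 2) + 1 = 1 := by decide
  have e11 : (1 : ZMod 2) + 1 = 0 := by decide
  rw [e01] at d0; rw [e11] at d1
  rcases zmod2_elim t1 with rfl | rfl <;> rcases zmod2_elim t2 with rfl | rfl <;>
    show A _ _ = 2 ^ (m - 2) <;> omega

lemma char2_eq {x y : F} (h : x + y = 0) : x = y := by
  linear_combination h - add_self_zero y

lemma char2_eq' {x y : F} (h : x = y) : x + y = 0 := by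
  subst h; exact add_self_zero x

lemma zmod2_lin3 : ∀ u v w : ZMod 2, u + v = 0 → v + w = 1 → u + w = 1 := by decide
lemma zmod2_lin3' : ∀ u v w : ZMod 2, u + v = 0 → u + w = 1 → v + w = 1 := by decide

lemma wt1_eq_sum (d : ℕ) (a b : F) :
    wt1 d a b = ∑ x : F, (univ.filter fun y : F =>
      ((x ≠ 0 ∧ Tr (x ^ (d + 1) * y + x ^ d * y + x) = 0)
        ∧ Tr (a * x ^ d * y + b * x) = 1)).card := by
  rw [wt1, D1, Finset.filter_filter]
  have h := card_filter_prod (fun q : F × F =>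
    (q.1 ≠ 0 ∧ Tr (q.1 ^ (d + 1) * q.2 + q.1 ^ d * q.2 + q.1) = 0)
      ∧ Tr (a * q.1 ^ d * q.2 + b * q.1) = 1)
  convert h using 2
  · ext q; simp only [Finset.mem_filter]
  · congr 1; ext q; simp only [Finset.mem_filter]

-- inner card at x = 1 is 0
lemma inner_one (m : ℕ) (hmo : Odd m) (hF : Fintype.card F = 2 ^ m) (d : ℕ) (a b : F) :
    (univ.filter fun y : F =>
      (((1:F) ≠ 0 ∧ Tr ((1:F) ^ (d + 1) * y + 1 ^ d * y + 1) = 0)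
        ∧ Tr (a * 1 ^ d * y + b * 1) = 1)).card = 0 := by
  rw [Finset.card_eq_zero, Finset.filter_eq_empty_iff]
  intro y _
  rintro ⟨⟨-, h⟩, -⟩
  have e1 : (1:F) ^ (d + 1) * y + 1 ^ d * y + 1 = (y + y) + 1 := by ring
  rw [e1, add_self_zero, zero_add, Tr_one m hmo hF] at h
  exact one_ne_zero h

-- inner card, generic x (coefficients independent)
lemma inner_main (m : ℕ) (hm : 3 ≤ m) (hF : Fintype.card F = 2 ^ m) (d : ℕ) (a b x : F)
    (hx0 : x ≠ 0) (hx1 : x ≠ 1) (ha0 : a ≠ 0) (hxa : x ≠ a + 1) :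
    (univ.filter fun y : F =>
      ((x ≠ 0 ∧ Tr (x ^ (d + 1) * y + x ^ d * y + x) = 0)
        ∧ Tr (a * x ^ d * y + b * x) = 1)).card = 2 ^ (m - 2) := by
  have hx1' : x + 1 ≠ 0 := fun h => hx1 (char2_eq h)
  have hxd : x ^ d ≠ 0 := pow_ne_zero _ hx0
  have hc1 : x ^ d * (x + 1) ≠ 0 := mul_ne_zero hxd hx1'
  have hc2 : a * x ^ d ≠ 0 := mul_ne_zero ha0 hxd
  have hne : x ^ d * (x + 1) ≠ a * x ^ d := by
    intro h
    apply hxa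
    have h' : x ^ d * (x + 1) = x ^ d * a := by rw [h]; ring
    have hca := mul_left_cancel₀ hxd h'
    linear_combination hca - add_self_zero (1 : F)
  have hrw : (univ.filter fun y : F =>
      ((x ≠ 0 ∧ Tr (x ^ (d + 1) * y + x ^ d * y + x) = 0)
        ∧ Tr (a * x ^ d * y + b * x) = 1))
      = univ.filter fun y : F =>
        (Tr ((x ^ d * (x + 1)) * y + x) = 0 ∧ Tr ((a * x ^ d) * y + b * x) = 1) := by
    apply Finset.filter_congr; intro y _
    have e1 : x ^ (d + 1) * y + x ^ d * y + x = (x ^ d * (x + 1)) * y + x := by ring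
    have e2 : a * x ^ d * y + b * x = (a * x ^ d) * y + b * x := by ring
    rw [e1, e2]
    simp [hx0]
  rw [hrw]
  exact card_tr_pair m (by omega) hF hc1 hc2 hne x (b * x) 0 1

-- inner card at x = a + 1 (a ≠ 0, 1)
lemma inner_special (m : ℕ) (hm : 3 ≤ m) (hF : Fintype.card F = 2 ^ m) (d : ℕ) (a b : F)
    (ha0 : a ≠ 0) (ha1 : a ≠ 1) :
    (univ.filter fun y : F =>
      (((a + 1) ≠ 0 ∧ Tr ((a + 1) ^ (d + 1) * y + (a + 1) ^ d * y + (a + 1)) = 0)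
        ∧ Tr (a * (a + 1) ^ d * y + b * (a + 1)) = 1)).card
      = if Tr ((1 + b) * (1 + a)) = 1 then 2 ^ (m - 1) else 0 := by
  set x : F := a + 1 with hxdef
  have hx0 : x ≠ 0 := fun h => ha1 (char2_eq (by rw [← h, hxdef]))
  have hxd : x ^ d ≠ 0 := pow_ne_zero _ hx0
  have hc : a * x ^ d ≠ 0 := mul_ne_zero ha0 hxd
  have hx1 : x + 1 = a := by rw [hxdef]; rw [add_assoc, add_self_zero, add_zero]
  have hT : Tr ((1 + b) * (1 + a)) = Tr x + Tr (b * x) := by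
    have e : (1 + b) * (1 + a) = x + b * x := by rw [hxdef]; ring
    rw [e, Tr_add]
  have hrw : (univ.filter fun y : F =>
      ((x ≠ 0 ∧ Tr (x ^ (d + 1) * y + x ^ d * y + x) = 0)
        ∧ Tr (a * x ^ d * y + b * x) = 1))
      = univ.filter fun y : F =>
        (Tr ((a * x ^ d) * y + x) = 0 ∧ Tr ((a * x ^ d) * y + b * x) = 1) := by
    apply Finset.filter_congr; intro y _
    have e1 : x ^ (d + 1) * y + x ^ d * y + x = (x ^ d * (x + 1)) * y + x := by ring
    rw [hx1] at e1
    have e1' : x ^ (d + 1) * y + x ^ d * y + x = (a * x ^ d) * y + x := by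
      rw [e1]; ring
    have e2 : a * x ^ d * y + b * x = (a * x ^ d) * y + b * x := by ring
    rw [e1', e2]
    simp [hx0]
  rw [hrw]
  rcases zmod2_elim (Tr ((1 + b) * (1 + a))) with hT1 | hT1 <;> rw [hT1]
  · -- trace is 0 : empty
    simp only [if_neg (by decide : ¬((0:ZMod 2) = 1))]
    rw [Finset.card_eq_zero, Finset.filter_eq_empty_iff]
    intro y _
    rintro ⟨h1, h2⟩
    rw [Tr_add] at h1 h2
    have hvw := zmod2_lin3' _ _ _ h1 h2
    rw [hT] at hT1
    rw [hvw] at hT1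
    exact one_ne_zero hT1
  · simp only [if_pos rfl]
    have hrw2 : (univ.filter fun y : F =>
        (Tr ((a * x ^ d) * y + x) = 0 ∧ Tr ((a * x ^ d) * y + b * x) = 1))
        = univ.filter fun y : F => Tr ((a * x ^ d) * y + x) = 0 := by
      apply Finset.filter_congr; intro y _
      constructor
      · rintro ⟨h, -⟩; exact h
      · intro h
        refine ⟨h, ?_⟩
        rw [Tr_add] at h ⊢
        rw [hT1] at hT
        exact zmod2_lin3 _ _ _ h hT.symm
    rw [hrw2]
    exact card_tr_affine m (by omega) hF hc x 0

-- inner card when a = 0, generic x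
lemma inner_a0 (m : ℕ) (hm : 3 ≤ m) (hF : Fintype.card F = 2 ^ m) (d : ℕ) (b x : F)
    (hx0 : x ≠ 0) (hx1 : x ≠ 1) :
    (univ.filter fun y : F =>
      ((x ≠ 0 ∧ Tr (x ^ (d + 1) * y + x ^ d * y + x) = 0)
        ∧ Tr (0 * x ^ d * y + b * x) = 1)).card
      = if Tr (b * x) = 1 then 2 ^ (m - 1) else 0 := by
  have hx1' : x + 1 ≠ 0 := fun h => hx1 (char2_eq h)
  have hc1 : x ^ d * (x + 1) ≠ 0 := mul_ne_zero (pow_ne_zero _ hx0) hx1'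
  have hrw : (univ.filter fun y : F =>
      ((x ≠ 0 ∧ Tr (x ^ (d + 1) * y + x ^ d * y + x) = 0)
        ∧ Tr (0 * x ^ d * y + b * x) = 1))
      = univ.filter fun y : F =>
        (Tr ((x ^ d * (x + 1)) * y + x) = 0 ∧ Tr (b * x) = 1) := by
    apply Finset.filter_congr; intro y _
    have e1 : x ^ (d + 1) * y + x ^ d * y + x = (x ^ d * (x + 1)) * y + x := by ring
    have e2 : 0 * x ^ d * y + b * x = b * x := by ring
    rw [e1, e2]
    simp [hx0]
  rw [hrw]
  rcases zmod2_elim (Tr (b * x)) with hT | hT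
  · rw [if_neg (by rw [hT]; decide)]
    rw [Finset.card_eq_zero, Finset.filter_eq_empty_iff]
    intro y _
    rintro ⟨-, h⟩
    rw [h] at hT
    exact one_ne_zero hT
  · rw [if_pos hT]
    have hrw2 : (univ.filter fun y : F =>
        (Tr ((x ^ d * (x + 1)) * y + x) = 0 ∧ Tr (b * x) = 1))
        = univ.filter fun y : F => Tr ((x ^ d * (x + 1)) * y + x) = 0 := by
      apply Finset.filter_congr; intro y _; simp [hT]
    rw [hrw2]
    exact card_tr_affine m (by omega) hF hc1 x 0

-- D1 inner counts
lemma inner_D1 (m : ℕ) (hm : 3 ≤ m) (hmo : Odd m) (hF : Fintype.card F = 2 ^ m) (d : ℕ) (x : F) :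
    (univ.filter fun y : F => (x ≠ 0 ∧ Tr (x ^ (d + 1) * y + x ^ d * y + x) = 0)).card
      = if x = 0 ∨ x = 1 then 0 else 2 ^ (m - 1) := by
  by_cases hx0 : x = 0
  · rw [if_pos (Or.inl hx0)]
    subst hx0
    rw [Finset.card_eq_zero, Finset.filter_eq_empty_iff]
    intro y _
    rintro ⟨h, -⟩
    exact h rfl
  by_cases hx1 : x = 1
  · rw [if_pos (Or.inr hx1)]
    subst hx1
    rw [Finset.card_eq_zero, Finset.filter_eq_empty_iff]
    intro y _
    rintro ⟨-, h⟩
    have e1 : (1:F) ^ (d + 1) * y + 1 ^ d * y + 1 = (y + y) + 1 := by ring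
    rw [e1, add_self_zero, zero_add, Tr_one m hmo hF] at h
    exact one_ne_zero h
  · rw [if_neg (by tauto)]
    have hx1' : x + 1 ≠ 0 := fun h => hx1 (char2_eq h)
    have hc1 : x ^ d * (x + 1) ≠ 0 := mul_ne_zero (pow_ne_zero _ hx0) hx1'
    have hrw : (univ.filter fun y : F => (x ≠ 0 ∧ Tr (x ^ (d + 1) * y + x ^ d * y + x) = 0))
        = univ.filter fun y : F => Tr ((x ^ d * (x + 1)) * y + x) = 0 := by
      apply Finset.filter_congr; intro y _
      have e1 : x ^ (d + 1) * y + x ^ d * y + x = (x ^ d * (x + 1)) * y + x := by ring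
      rw [e1]
      simp [hx0]
    rw [hrw]
    exact card_tr_affine m (by omega) hF hc1 x 0

lemma D1_card (m : ℕ) (hm : 3 ≤ m) (hmo : Odd m) (hF : Fintype.card F = 2 ^ m) (d : ℕ) :
    (D1 F d).card = (2 ^ m - 2) * 2 ^ (m - 1) := by
  have h := card_filter_prod (fun q : F × F =>
    q.1 ≠ 0 ∧ Tr (q.1 ^ (d + 1) * q.2 + q.1 ^ d * q.2 + q.1) = 0)
  have hD : (D1 F d).card = ∑ x : F, (univ.filter fun y : F =>
      (x ≠ 0 ∧ Tr (x ^ (d + 1) * y + x ^ d * y + x) = 0)).card := by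
    rw [D1]
    convert h using 2
    · ext q; simp only [Finset.mem_filter]
    · congr 1; ext q; simp only [Finset.mem_filter]
  rw [hD]
  rw [Finset.sum_congr rfl (fun x _ => inner_D1 m hm hmo hF d x)]
  rw [Finset.sum_ite]
  simp only [Finset.sum_const, Finset.sum_const_zero, smul_eq_mul, mul_zero, zero_add]
  have hset : (univ.filter fun x : F => ¬(x = 0 ∨ x = 1)) = univ \ {0, 1} := by
    ext z; simp [not_or]
  rw [hset, Finset.card_sdiff_of_subset (Finset.subset_univ _), Finset.card_univ, hF]
  have h01 : (0:F) ∉ ({1} : Finset F) := by simp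
  rw [Finset.card_insert_of_notMem h01, Finset.card_singleton]

lemma wt1_00 (d : ℕ) : wt1 d (0:F) (0:F) = 0 := by
  rw [wt1, Finset.card_eq_zero, Finset.filter_eq_empty_iff]
  intro q _
  intro h
  have e : (0:F) * q.1 ^ d * q.2 + 0 * q.1 = 0 := by ring
  rw [e, Tr_zero_s14] at h
  exact one_ne_zero h.symm

lemma wt1_a1 (m : ℕ) (hm : 3 ≤ m) (hmo : Odd m) (hF : Fintype.card F = 2 ^ m) (d : ℕ) (b : F) :
    wt1 d (1:F) b = (2 ^ m - 2) * 2 ^ (m - 2) := by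
  rw [wt1_eq_sum]
  have hstep : ∀ x : F, (univ.filter fun y : F =>
      ((x ≠ 0 ∧ Tr (x ^ (d + 1) * y + x ^ d * y + x) = 0)
        ∧ Tr (1 * x ^ d * y + b * x) = 1)).card
      = if x = 0 ∨ x = 1 then 0 else 2 ^ (m - 2) := by
    intro x
    by_cases hx0 : x = 0
    · rw [if_pos (Or.inl hx0)]; subst hx0
      rw [Finset.card_eq_zero, Finset.filter_eq_empty_iff]
      intro y _; rintro ⟨⟨h, -⟩, -⟩; exact h rfl
    by_cases hx1 : x = 1
    · rw [if_pos (Or.inr hx1)]; subst hx1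
      exact inner_one m hmo hF d 1 b
    · rw [if_neg (by tauto)]
      refine inner_main m hm hF d 1 b x hx0 hx1 one_ne_zero ?_
      rw [show (1:F) + 1 = 0 from add_self_zero 1]
      exact hx0
  rw [Finset.sum_congr rfl (fun x _ => hstep x)]
  rw [Finset.sum_ite]
  simp only [Finset.sum_const, Finset.sum_const_zero, smul_eq_mul, mul_zero, zero_add]
  have hset : (univ.filter fun x : F => ¬(x = 0 ∨ x = 1)) = univ \ {0, 1} := by
    ext z; simp [not_or]
  rw [hset, Finset.card_sdiff_of_subset (Finset.subset_univ _), Finset.card_univ, hF]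
  have h01 : (0:F) ∉ ({1} : Finset F) := by simp
  rw [Finset.card_insert_of_notMem h01, Finset.card_singleton]

lemma wt1_a0_aux (m : ℕ) (hm : 3 ≤ m) (hmo : Odd m) (hF : Fintype.card F = 2 ^ m) (d : ℕ)
    (b : F) (hb : b ≠ 0) :
    wt1 d (0:F) b = ((univ.filter fun x : F => Tr (b * x) = 1).erase 1).card * 2 ^ (m - 1) := by
  rw [wt1_eq_sum]
  have hstep : ∀ x : F, (univ.filter fun y : F =>
      ((x ≠ 0 ∧ Tr (x ^ (d + 1) * y + x ^ d * y + x) = 0)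
        ∧ Tr (0 * x ^ d * y + b * x) = 1)).card
      = if ¬(x = 0 ∨ x = 1) ∧ Tr (b * x) = 1 then 2 ^ (m - 1) else 0 := by
    intro x
    by_cases hx0 : x = 0
    · rw [if_neg (by tauto)]; subst hx0
      rw [Finset.card_eq_zero, Finset.filter_eq_empty_iff]
      intro y _; rintro ⟨⟨h, -⟩, -⟩; exact h rfl
    by_cases hx1 : x = 1
    · rw [if_neg (by tauto)]; subst hx1
      exact inner_one m hmo hF d 0 b
    · rw [inner_a0 m hm hF d b x hx0 hx1]
      by_cases hT : Tr (b * x) = 1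
      · rw [if_pos hT, if_pos ⟨by tauto, hT⟩]
      · rw [if_neg hT, if_neg (by tauto)]
  rw [Finset.sum_congr rfl (fun x _ => hstep x)]
  rw [Finset.sum_ite]
  simp only [Finset.sum_const, Finset.sum_const_zero, smul_eq_mul, mul_zero, add_zero]
  have hseteq : (univ.filter fun x : F => ¬(x = 0 ∨ x = 1) ∧ Tr (b * x) = 1)
      = (univ.filter fun x : F => Tr (b * x) = 1).erase 1 := by
    ext z
    simp only [Finset.mem_filter, Finset.mem_erase, Finset.mem_univ, true_and, not_or]
    constructor
    · rintro ⟨⟨hz0, hz1⟩, ht⟩; exact ⟨hz1, ht⟩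
    · rintro ⟨hz1, ht⟩
      refine ⟨⟨?_, hz1⟩, ht⟩
      intro hz0
      rw [hz0, mul_zero, Tr_zero_s14] at ht
      exact one_ne_zero ht.symm
  rw [hseteq]

lemma card_tr_lin (m : ℕ) (hm : 3 ≤ m) (hF : Fintype.card F = 2 ^ m) {c : F} (hc : c ≠ 0)
    (t : ZMod 2) : (univ.filter fun x : F => Tr (c * x) = t).card = 2 ^ (m - 1) := by
  have h := card_tr_affine m (by omega) hF hc 0 t
  simp only [add_zero] at h
  exact h

lemma wt1_a0_t0 (m : ℕ) (hm : 3 ≤ m) (hmo : Odd m) (hF : Fintype.card F = 2 ^ m) (d : ℕ)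
    (b : F) (hb : b ≠ 0) (hTb : Tr b = 0) :
    wt1 d (0:F) b = 2 ^ (m - 1) * 2 ^ (m - 1) := by
  rw [wt1_a0_aux m hm hmo hF d b hb]
  congr 1
  rw [Finset.erase_eq_of_notMem, card_tr_lin m hm hF hb 1]
  simp only [Finset.mem_filter, mul_one]
  rw [hTb]
  simp

lemma wt1_a0_t1 (m : ℕ) (hm : 3 ≤ m) (hmo : Odd m) (hF : Fintype.card F = 2 ^ m) (d : ℕ)
    (b : F) (hTb : Tr b = 1) :
    wt1 d (0:F) b = (2 ^ (m - 1) - 1) * 2 ^ (m - 1) := by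
  have hb : b ≠ 0 := by intro h; rw [h, Tr_zero_s14] at hTb; exact one_ne_zero hTb.symm
  rw [wt1_a0_aux m hm hmo hF d b hb]
  congr 1
  rw [Finset.card_erase_of_mem, card_tr_lin m hm hF hb 1]
  simp only [Finset.mem_filter, Finset.mem_univ, true_and, mul_one]
  exact hTb

lemma wt1_gen (m : ℕ) (hm : 3 ≤ m) (hmo : Odd m) (hF : Fintype.card F = 2 ^ m) (d : ℕ)
    (a b : F) (ha0 : a ≠ 0) (ha1 : a ≠ 1) :
    wt1 d a b = (2 ^ m - 3) * 2 ^ (m - 2)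
      + (if Tr ((1 + b) * (1 + a)) = 1 then 2 ^ (m - 1) else 0) := by
  have ha10 : a + 1 ≠ 0 := fun h => ha1 (char2_eq h)
  have ha11 : a + 1 ≠ 1 := fun h => ha0 (by linear_combination h)
  rw [wt1_eq_sum]
  have hstep : ∀ x : F, (univ.filter fun y : F =>
      ((x ≠ 0 ∧ Tr (x ^ (d + 1) * y + x ^ d * y + x) = 0)
        ∧ Tr (a * x ^ d * y + b * x) = 1)).card
      = if x = 0 ∨ x = 1 then 0 else if x = a + 1
          then (if Tr ((1 + b) * (1 + a)) = 1 then 2 ^ (m - 1) else 0)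
          else 2 ^ (m - 2) := by
    intro x
    by_cases hx0 : x = 0
    · rw [if_pos (Or.inl hx0)]; subst hx0
      rw [Finset.card_eq_zero, Finset.filter_eq_empty_iff]
      intro y _; rintro ⟨⟨h, -⟩, -⟩; exact h rfl
    by_cases hx1 : x = 1
    · rw [if_pos (Or.inr hx1)]; subst hx1
      exact inner_one m hmo hF d a b
    by_cases hxa : x = a + 1
    · rw [if_neg (by tauto), if_pos hxa]; subst hxa
      exact inner_special m hm hF d a b ha0 ha1
    · rw [if_neg (by tauto), if_neg hxa]
      exact inner_main m hm hF d a b x hx0 hx1 ha0 hxa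
  rw [Finset.sum_congr rfl (fun x _ => hstep x)]
  set g : F → ℕ := fun x => if x = 0 ∨ x = 1 then 0 else if x = a + 1
      then (if Tr ((1 + b) * (1 + a)) = 1 then 2 ^ (m - 1) else 0)
      else 2 ^ (m - 2) with hg
  have h0 : (0:F) ∉ (insert 1 {a + 1} : Finset F) := by
    simp only [Finset.mem_insert, Finset.mem_singleton]
    push_neg
    exact ⟨fun h => one_ne_zero h.symm, fun h => ha10 h.symm⟩
  have h1 : (1:F) ∉ ({a + 1} : Finset F) := by
    simp only [Finset.mem_singleton]
    exact fun h => ha11 h.symm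
  have hsd := Finset.sum_sdiff (f := g) (Finset.subset_univ (insert 0 (insert 1 {a + 1})))
  rw [← hsd]
  have hsum1 : ∑ x ∈ insert 0 (insert 1 ({a + 1} : Finset F)), g x
      = (if Tr ((1 + b) * (1 + a)) = 1 then 2 ^ (m - 1) else 0) := by
    rw [Finset.sum_insert h0, Finset.sum_insert h1, Finset.sum_singleton]
    have hg0 : g 0 = 0 := by simp [hg]
    have hg1 : g 1 = 0 := by simp [hg]
    have hga : g (a + 1) = (if Tr ((1 + b) * (1 + a)) = 1 then 2 ^ (m - 1) else 0) := by
      simp [hg, ha10, ha11]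
    rw [hg0, hg1, hga, zero_add, zero_add]
  have hsum2 : ∑ x ∈ univ \ insert 0 (insert 1 ({a + 1} : Finset F)), g x
      = (2 ^ m - 3) * 2 ^ (m - 2) := by
    have hc : ∀ x ∈ univ \ insert 0 (insert 1 ({a + 1} : Finset F)), g x = 2 ^ (m - 2) := by
      intro x hx
      simp only [Finset.mem_sdiff, Finset.mem_insert, Finset.mem_singleton, not_or] at hx
      obtain ⟨-, hx0, hx1, hxa⟩ := hx
      simp [hg, hx0, hx1, hxa]
    rw [Finset.sum_congr rfl hc, Finset.sum_const, smul_eq_mul]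
    congr 1
    rw [Finset.card_sdiff_of_subset (Finset.subset_univ _), Finset.card_univ, hF,
      Finset.card_insert_of_notMem h0, Finset.card_insert_of_notMem h1,
      Finset.card_singleton]
  rw [hsum1, hsum2]

theorem stmt14 (m d : ℕ) (hm : 3 ≤ m) (hmo : Odd m) (hd : 1 ≤ d)
    (hF : Fintype.card F = 2 ^ m) :
    -- length
    (D1 F d).card = 2 ^ m * (2 ^ (m - 1) - 1) ∧
    -- dimension 2m: the encoding map (a,b) ↦ c(a,b) is injective
    Function.Injective (fun ab : F × F => fun q : (D1 F d) =>
      Tr (ab.1 * q.1.1 ^ d * q.1.2 + ab.2 * q.1.1)) ∧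
    -- minimum distance
    (∀ a b : F, (a, b) ≠ (0, 0) → 2 ^ (m - 2) * (2 ^ m - 3) ≤ wt1 d a b) ∧
    -- weight distribution
    (univ.filter fun ab : F × F => wt1 d ab.1 ab.2 = 2 ^ (m - 2) * (2 ^ m - 3)).card
      = 2 ^ m * (2 ^ (m - 1) - 1) ∧
    (univ.filter fun ab : F × F => wt1 d ab.1 ab.2 = 2 ^ (m - 1) * (2 ^ (m - 1) - 1)).card
      = 3 * 2 ^ (m - 1) ∧
    (univ.filter fun ab : F × F => wt1 d ab.1 ab.2 = 2 ^ (m - 2) * (2 ^ m - 1)).card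
      = 2 ^ m * (2 ^ (m - 1) - 1) ∧
    (univ.filter fun ab : F × F => wt1 d ab.1 ab.2 = 2 ^ (2 * m - 2)).card
      = 2 ^ (m - 1) - 1 := by
  have hK : 2 ≤ 2 ^ (m - 2) := by
    calc 2 = 2 ^ 1 := (pow_one 2).symm
    _ ≤ 2 ^ (m - 2) := Nat.pow_le_pow_right (by omega) (by omega)
  set K := 2 ^ (m - 2) with hKdef
  have hK2 : 2 ^ (m - 1) = 2 * K := by
    rw [hKdef, ← pow_succ']
    congr 1; omega
  have hK4 : 2 ^ m = 4 * K := by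
    have : m = (m - 2) + 2 := by omega
    rw [this, pow_add, hKdef]; ring
  have hKK : 2 ^ (2 * m - 2) = 4 * (K * K) := by
    have : 2 * m - 2 = (m - 1) + (m - 1) := by omega
    rw [this, pow_add, hK2]; ring
  -- value conversions
  have hv1 : K * (2 ^ m - 3) = K * (4 * K - 3) := by rw [hK4]
  have hv2 : 2 ^ (m - 1) * (2 ^ (m - 1) - 1) = K * (4 * K - 2) := by
    rw [hK2]; zify [show 1 ≤ 2 * K by omega, show 2 ≤ 4 * K by omega]; ring
  have hv2' : (2 ^ m - 2) * K = K * (4 * K - 2) := by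
    rw [hK4]; zify [show 2 ≤ 4 * K by omega]; ring
  have hv2'' : (2 ^ (m - 1) - 1) * 2 ^ (m - 1) = K * (4 * K - 2) := by
    rw [hK2]; zify [show 1 ≤ 2 * K by omega, show 2 ≤ 4 * K by omega]; ring
  have hv1' : (2 ^ m - 3) * K = K * (4 * K - 3) := by
    rw [hK4]; zify [show 3 ≤ 4 * K by omega]; ring
  have hv3 : K * (2 ^ m - 1) = K * (4 * K - 1) := by rw [hK4]
  have hv3' : (2 ^ m - 3) * K + 2 ^ (m - 1) = K * (4 * K - 1) := by
    rw [hK4, hK2]; zify [show 3 ≤ 4 * K by omega, show 1 ≤ 4 * K by omega]; ring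
  have hv4 : 2 ^ (m - 1) * 2 ^ (m - 1) = 4 * (K * K) := by rw [hK2]; ring
  have hvD : (2 ^ m - 2) * 2 ^ (m - 1) = 2 ^ m * (2 ^ (m - 1) - 1) := by
    rw [hK4, hK2]; zify [show 2 ≤ 4 * K by omega, show 1 ≤ 2 * K by omega]; ring
  -- distinctness
  have hd1 : 0 < K * (4 * K - 3) := Nat.mul_pos (by omega) (by omega)
  have hd12 : K * (4 * K - 3) < K * (4 * K - 2) :=
    Nat.mul_lt_mul_of_le_of_lt (le_refl K) (by omega) (by omega)
  have hd23 : K * (4 * K - 2) < K * (4 * K - 1) :=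
    Nat.mul_lt_mul_of_le_of_lt (le_refl K) (by omega) (by omega)
  have hd34 : K * (4 * K - 1) < 4 * (K * K) := by
    have he : 4 * (K * K) = K * (4 * K) := by ring
    rw [he]
    exact Nat.mul_lt_mul_of_le_of_lt (le_refl K) (by omega) (by omega)
  -- classification
  have hclass : ∀ a b : F,
      (a = 0 ∧ b = 0 ∧ wt1 d a b = 0) ∨
      (a = 0 ∧ b ≠ 0 ∧ Tr b = 0 ∧ wt1 d a b = 4 * (K * K)) ∨
      (a = 0 ∧ Tr b = 1 ∧ wt1 d a b = K * (4 * K - 2)) ∨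
      (a = 1 ∧ wt1 d a b = K * (4 * K - 2)) ∨
      (a ≠ 0 ∧ a ≠ 1 ∧ Tr ((1 + b) * (1 + a)) = 0 ∧ wt1 d a b = K * (4 * K - 3)) ∨
      (a ≠ 0 ∧ a ≠ 1 ∧ Tr ((1 + b) * (1 + a)) = 1 ∧ wt1 d a b = K * (4 * K - 1)) := by
    intro a b
    by_cases ha0 : a = 0
    · subst ha0
      by_cases hb : b = 0
      · subst hb; exact Or.inl ⟨rfl, rfl, wt1_00 d⟩
      · rcases zmod2_elim (Tr b) with hTb | hTb
        · refine Or.inr (Or.inl ⟨rfl, hb, hTb, ?_⟩)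
          rw [wt1_a0_t0 m hm hmo hF d b hb hTb, hv4]
        · refine Or.inr (Or.inr (Or.inl ⟨rfl, hTb, ?_⟩))
          rw [wt1_a0_t1 m hm hmo hF d b hTb, hv2'']
    by_cases ha1 : a = 1
    · subst ha1
      refine Or.inr (Or.inr (Or.inr (Or.inl ⟨rfl, ?_⟩)))
      rw [wt1_a1 m hm hmo hF d b]
      rw [← hKdef, hv2']
    · rcases zmod2_elim (Tr ((1 + b) * (1 + a))) with hT | hT
      · refine Or.inr (Or.inr (Or.inr (Or.inr (Or.inl ⟨ha0, ha1, hT, ?_⟩))))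
        rw [wt1_gen m hm hmo hF d a b ha0 ha1, if_neg (by rw [hT]; decide), add_zero,
          ← hKdef, hv1']
      · refine Or.inr (Or.inr (Or.inr (Or.inr (Or.inr ⟨ha0, ha1, hT, ?_⟩))))
        rw [wt1_gen m hm hmo hF d a b ha0 ha1, if_pos hT, ← hKdef, hv3']
  -- minimum distance
  have hmin : ∀ a b : F, (a, b) ≠ (0, 0) → K * (4 * K - 3) ≤ wt1 d a b := by
    intro a b hne
    rcases hclass a b with ⟨h1,h2,-⟩|⟨-,-,-,h⟩|⟨-,-,h⟩|⟨-,h⟩|⟨-,-,-,h⟩|⟨-,-,-,h⟩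
    · exact absurd (by rw [h1, h2]) hne
    · rw [h]; exact le_of_lt (lt_trans (lt_trans hd12 hd23) hd34)
    · rw [h]; exact le_of_lt hd12
    · rw [h]; exact le_of_lt hd12
    · rw [h]
    · rw [h]; exact le_of_lt (lt_trans hd12 hd23)
  -- injectivity
  have hinj : Function.Injective (fun ab : F × F => fun q : (D1 F d) =>
      Tr (ab.1 * q.1.1 ^ d * q.1.2 + ab.2 * q.1.1)) := by
    rintro ⟨a, b⟩ ⟨a', b'⟩ h
    simp only at h
    have hz : wt1 d (a + a') (b + b') = 0 := by
      rw [wt1, Finset.card_eq_zero, Finset.filter_eq_empty_iff]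
      intro q hq hcon
      have hq' : Tr (a * q.1 ^ d * q.2 + b * q.1)
          = Tr (a' * q.1 ^ d * q.2 + b' * q.1) := congrFun h (⟨q, hq⟩ : (D1 F d))
      have he : (a + a') * q.1 ^ d * q.2 + (b + b') * q.1
          = (a * q.1 ^ d * q.2 + b * q.1) + (a' * q.1 ^ d * q.2 + b' * q.1) := by ring
      rw [he, Tr_add, hq'] at hcon
      have hzz : ∀ z : ZMod 2, z + z = 0 := by decide
      rw [hzz] at hcon
      exact one_ne_zero hcon.symm
    by_cases hne : (a + a', b + b') = ((0 : F), (0 : F))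
    · rw [Prod.mk.injEq] at hne ⊢
      exact ⟨char2_eq hne.1, char2_eq hne.2⟩
    · exfalso
      have hge := hmin (a + a') (b + b') hne
      rw [hz] at hge
      have := hd1
      omega
  -- generic count for classes 5/6
  have hcountA : ∀ t : ZMod 2, (univ.filter fun ab : F × F =>
      ab.1 ≠ 0 ∧ ab.1 ≠ 1 ∧ Tr ((1 + ab.2) * (1 + ab.1)) = t).card
      = (2 ^ m - 2) * 2 ^ (m - 1) := by
    intro t
    have h := card_filter_prod (fun ab : F × F =>
      ab.1 ≠ 0 ∧ ab.1 ≠ 1 ∧ Tr ((1 + ab.2) * (1 + ab.1)) = t)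
    have h2 : (univ.filter fun ab : F × F =>
        ab.1 ≠ 0 ∧ ab.1 ≠ 1 ∧ Tr ((1 + ab.2) * (1 + ab.1)) = t).card
        = ∑ a : F, (univ.filter fun b : F =>
            a ≠ 0 ∧ a ≠ 1 ∧ Tr ((1 + b) * (1 + a)) = t).card := by
      convert h using 2
      · ext q; simp only [Finset.mem_filter]
      · congr 1; ext q; simp only [Finset.mem_filter]
    rw [h2]
    have hstep : ∀ a : F, (univ.filter fun b : F =>
        a ≠ 0 ∧ a ≠ 1 ∧ Tr ((1 + b) * (1 + a)) = t).card
        = if a = 0 ∨ a = 1 then 0 else 2 ^ (m - 1) := by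
      intro a
      by_cases ha0 : a = 0
      · rw [if_pos (Or.inl ha0)]
        rw [Finset.card_eq_zero, Finset.filter_eq_empty_iff]
        intro y _; rintro ⟨hh, -⟩; exact hh ha0
      by_cases ha1 : a = 1
      · rw [if_pos (Or.inr ha1)]
        rw [Finset.card_eq_zero, Finset.filter_eq_empty_iff]
        intro y _; rintro ⟨-, hh, -⟩; exact hh ha1
      · rw [if_neg (by tauto)]
        have hc : (1 : F) + a ≠ 0 := fun hh => ha1 (char2_eq hh).symm
        have hrw : (univ.filter fun b : F => a ≠ 0 ∧ a ≠ 1 ∧ Tr ((1 + b) * (1 + a)) = t)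
            = univ.filter fun b : F => Tr ((1 + a) * b + (1 + a)) = t := by
          apply Finset.filter_congr; intro b _
          have e : (1 + b) * (1 + a) = (1 + a) * b + (1 + a) := by ring
          rw [e]
          simp [ha0, ha1]
        rw [hrw]
        exact card_tr_affine m (by omega) hF hc (1 + a) t
    rw [Finset.sum_congr rfl (fun a _ => hstep a)]
    rw [Finset.sum_ite]
    simp only [Finset.sum_const, Finset.sum_const_zero, smul_eq_mul, mul_zero, zero_add]
    have hset : (univ.filter fun x : F => ¬(x = 0 ∨ x = 1)) = univ \ {0, 1} := by
      ext z; simp [not_or]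
    rw [hset, Finset.card_sdiff_of_subset (Finset.subset_univ _), Finset.card_univ, hF]
    have h01 : (0:F) ∉ ({1} : Finset F) := by simp
    rw [Finset.card_insert_of_notMem h01, Finset.card_singleton]
  -- frequency set characterizations
  have hf1 : (univ.filter fun ab : F × F => wt1 d ab.1 ab.2 = K * (4 * K - 3))
      = univ.filter fun ab : F × F =>
        ab.1 ≠ 0 ∧ ab.1 ≠ 1 ∧ Tr ((1 + ab.2) * (1 + ab.1)) = 0 := by
    ext ⟨a, b⟩
    simp only [Finset.mem_filter, Finset.mem_univ, true_and]
    constructor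
    · intro hw
      rcases hclass a b with ⟨-,-,h⟩|⟨-,-,-,h⟩|⟨-,-,h⟩|⟨-,h⟩|⟨h1,h2,h3,-⟩|⟨-,-,-,h⟩
      · rw [h] at hw; exact absurd hw.symm (Nat.ne_of_gt hd1)
      · rw [h] at hw
        exact absurd hw (Nat.ne_of_gt (lt_trans (lt_trans hd12 hd23) hd34))
      · rw [h] at hw; exact absurd hw (Nat.ne_of_gt hd12)
      · rw [h] at hw; exact absurd hw (Nat.ne_of_gt hd12)
      · exact ⟨h1, h2, h3⟩
      · rw [h] at hw; exact absurd hw (Nat.ne_of_gt (lt_trans hd12 hd23))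
    · rintro ⟨h1, h2, h3⟩
      rcases hclass a b with ⟨h,-,-⟩|⟨h,-,-,-⟩|⟨h,-,-⟩|⟨h,-⟩|⟨-,-,-,h⟩|⟨-,-,h4,-⟩
      · exact absurd h h1
      · exact absurd h h1
      · exact absurd h h1
      · exact absurd h h2
      · exact h
      · rw [h3] at h4; exact absurd h4 (by decide)
  have hf3 : (univ.filter fun ab : F × F => wt1 d ab.1 ab.2 = K * (4 * K - 1))
      = univ.filter fun ab : F × F =>
        ab.1 ≠ 0 ∧ ab.1 ≠ 1 ∧ Tr ((1 + ab.2) * (1 + ab.1)) = 1 := by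
    ext ⟨a, b⟩
    simp only [Finset.mem_filter, Finset.mem_univ, true_and]
    constructor
    · intro hw
      rcases hclass a b with ⟨-,-,h⟩|⟨-,-,-,h⟩|⟨-,-,h⟩|⟨-,h⟩|⟨-,-,-,h⟩|⟨h1,h2,h3,-⟩
      · rw [h] at hw
        exact absurd hw.symm (Nat.ne_of_gt (lt_of_le_of_lt (Nat.zero_le _) (lt_trans hd12 hd23)))
      · rw [h] at hw; exact absurd hw (Nat.ne_of_gt hd34)
      · rw [h] at hw; exact absurd hw.symm (Nat.ne_of_gt hd23)
      · rw [h] at hw; exact absurd hw.symm (Nat.ne_of_gt hd23)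
      · rw [h] at hw; exact absurd hw.symm (Nat.ne_of_gt (lt_trans hd12 hd23))
      · exact ⟨h1, h2, h3⟩
    · rintro ⟨h1, h2, h3⟩
      rcases hclass a b with ⟨h,-,-⟩|⟨h,-,-,-⟩|⟨h,-,-⟩|⟨h,-⟩|⟨-,-,h4,-⟩|⟨-,-,-,h⟩
      · exact absurd h h1
      · exact absurd h h1
      · exact absurd h h1
      · exact absurd h h2
      · rw [h3] at h4; exact absurd h4 (by decide)
      · exact h
  have hf2 : (univ.filter fun ab : F × F => wt1 d ab.1 ab.2 = K * (4 * K - 2))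
      = univ.filter fun ab : F × F => (ab.1 = 0 ∧ Tr ab.2 = 1) ∨ ab.1 = 1 := by
    ext ⟨a, b⟩
    simp only [Finset.mem_filter, Finset.mem_univ, true_and]
    constructor
    · intro hw
      rcases hclass a b with ⟨-,-,h⟩|⟨-,-,-,h⟩|⟨h1,h2,-⟩|⟨h1,-⟩|⟨-,-,-,h⟩|⟨-,-,-,h⟩
      · rw [h] at hw
        exact absurd hw.symm (Nat.ne_of_gt (lt_of_le_of_lt (Nat.zero_le _) hd12))
      · rw [h] at hw; exact absurd hw (Nat.ne_of_gt (lt_trans hd23 hd34))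
      · exact Or.inl ⟨h1, h2⟩
      · exact Or.inr h1
      · rw [h] at hw; exact absurd hw.symm (Nat.ne_of_gt hd12)
      · rw [h] at hw; exact absurd hw (Nat.ne_of_gt hd23)
    · rintro (⟨h1, h2⟩ | h1)
      · subst h1
        rcases hclass 0 b with ⟨-,hb,-⟩|⟨-,-,h3,-⟩|⟨-,-,h⟩|⟨hh,-⟩|⟨hh,-,-,-⟩|⟨hh,-,-,-⟩
        · rw [hb, Tr_zero_s14] at h2; exact absurd h2 (by decide)
        · rw [h2] at h3; exact absurd h3 (by decide)
        · exact h
        · exact absurd hh.symm one_ne_zero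
        · exact absurd rfl hh
        · exact absurd rfl hh
      · subst h1
        rcases hclass 1 b with ⟨hh,-,-⟩|⟨hh,-,-,-⟩|⟨hh,-,-⟩|⟨-,h⟩|⟨-,hh,-,-⟩|⟨-,hh,-,-⟩
        · exact absurd hh one_ne_zero
        · exact absurd hh one_ne_zero
        · exact absurd hh one_ne_zero
        · exact h
        · exact absurd rfl hh
        · exact absurd rfl hh
  have hf4 : (univ.filter fun ab : F × F => wt1 d ab.1 ab.2 = 4 * (K * K))
      = univ.filter fun ab : F × F => ab.1 = 0 ∧ ab.2 ≠ 0 ∧ Tr ab.2 = 0 := by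
    ext ⟨a, b⟩
    simp only [Finset.mem_filter, Finset.mem_univ, true_and]
    constructor
    · intro hw
      rcases hclass a b with ⟨-,-,h⟩|⟨h1,h2,h3,-⟩|⟨-,-,h⟩|⟨-,h⟩|⟨-,-,-,h⟩|⟨-,-,-,h⟩
      · rw [h] at hw
        exact absurd hw.symm
          (Nat.ne_of_gt (lt_of_le_of_lt (Nat.zero_le _) (lt_trans (lt_trans hd12 hd23) hd34)))
      · exact ⟨h1, h2, h3⟩
      · rw [h] at hw; exact absurd hw.symm (Nat.ne_of_gt (lt_trans hd23 hd34))
      · rw [h] at hw; exact absurd hw.symm (Nat.ne_of_gt (lt_trans hd23 hd34))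
      · rw [h] at hw
        exact absurd hw.symm (Nat.ne_of_gt (lt_trans (lt_trans hd12 hd23) hd34))
      · rw [h] at hw; exact absurd hw.symm (Nat.ne_of_gt hd34)
    · rintro ⟨h1, h2, h3⟩
      subst h1
      rcases hclass 0 b with ⟨-,hb,-⟩|⟨-,-,-,h⟩|⟨-,h4,-⟩|⟨hh,-⟩|⟨hh,-,-,-⟩|⟨hh,-,-,-⟩
      · exact absurd hb h2
      · exact h
      · rw [h3] at h4; exact absurd h4 (by decide)
      · exact absurd hh.symm one_ne_zero
      · exact absurd rfl hh
      · exact absurd rfl hh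
  -- count for class W2
  have hcount2 : (univ.filter fun ab : F × F =>
      (ab.1 = 0 ∧ Tr ab.2 = 1) ∨ ab.1 = 1).card = 3 * 2 ^ (m - 1) := by
    have h := card_filter_prod (fun ab : F × F => (ab.1 = 0 ∧ Tr ab.2 = 1) ∨ ab.1 = 1)
    have h2 : (univ.filter fun ab : F × F => (ab.1 = 0 ∧ Tr ab.2 = 1) ∨ ab.1 = 1).card
        = ∑ a : F, (univ.filter fun b : F => (a = 0 ∧ Tr b = 1) ∨ a = 1).card := by
      convert h using 2
      · ext q; simp only [Finset.mem_filter]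
      · congr 1; ext q; simp only [Finset.mem_filter]
    rw [h2]
    have hstep : ∀ a : F, (univ.filter fun b : F => (a = 0 ∧ Tr b = 1) ∨ a = 1).card
        = if a = 0 then 2 ^ (m - 1) else if a = 1 then 2 ^ m else 0 := by
      intro a
      by_cases ha0 : a = 0
      · rw [if_pos ha0]
        subst ha0
        have hrw : (univ.filter fun b : F => ((0:F) = 0 ∧ Tr b = 1) ∨ (0:F) = 1)
            = univ.filter fun b : F => Tr ((1:F) * b) = 1 := by
          apply Finset.filter_congr; intro b _
          rw [one_mul]
          simp
        rw [hrw]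
        exact card_tr_lin m hm hF one_ne_zero 1
      by_cases ha1 : a = 1
      · rw [if_neg ha0, if_pos ha1]
        subst ha1
        have hrw : (univ.filter fun b : F => ((1:F) = 0 ∧ Tr b = 1) ∨ (1:F) = 1)
            = univ := by
          apply Finset.filter_true_of_mem
          intro b _
          exact Or.inr rfl
        rw [hrw, Finset.card_univ, hF]
      · rw [if_neg ha0, if_neg ha1]
        rw [Finset.card_eq_zero, Finset.filter_eq_empty_iff]
        intro y _
        rintro (⟨hh, -⟩ | hh)
        · exact ha0 hh
        · exact ha1 hh
    rw [Finset.sum_congr rfl (fun a _ => hstep a)]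
    have h0 : (0:F) ∉ ({1} : Finset F) := by simp
    have hsd := Finset.sum_sdiff
      (f := fun a : F => if a = 0 then 2 ^ (m - 1) else if a = 1 then 2 ^ m else 0)
      (Finset.subset_univ ({0, 1} : Finset F))
    rw [← hsd]
    have hz : ∑ a ∈ univ \ ({0, 1} : Finset F),
        (if a = 0 then 2 ^ (m - 1) else if a = 1 then 2 ^ m else 0) = 0 := by
      apply Finset.sum_eq_zero
      intro a ha
      simp only [Finset.mem_sdiff, Finset.mem_insert, Finset.mem_singleton, not_or] at ha
      rw [if_neg ha.2.1, if_neg ha.2.2]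
    rw [hz, zero_add, Finset.sum_insert h0, Finset.sum_singleton]
    rw [if_pos rfl, if_neg one_ne_zero, if_pos rfl]
    rw [hK2, hK4]; ring
  -- count for class W4
  have hcount4 : (univ.filter fun ab : F × F =>
      ab.1 = 0 ∧ ab.2 ≠ 0 ∧ Tr ab.2 = 0).card = 2 ^ (m - 1) - 1 := by
    have h := card_filter_prod (fun ab : F × F => ab.1 = 0 ∧ ab.2 ≠ 0 ∧ Tr ab.2 = 0)
    have h2 : (univ.filter fun ab : F × F => ab.1 = 0 ∧ ab.2 ≠ 0 ∧ Tr ab.2 = 0).card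
        = ∑ a : F, (univ.filter fun b : F => a = 0 ∧ b ≠ 0 ∧ Tr b = 0).card := by
      convert h using 2
      · ext q; simp only [Finset.mem_filter]
      · congr 1; ext q; simp only [Finset.mem_filter]
    rw [h2]
    have hstep : ∀ a : F, (univ.filter fun b : F => a = 0 ∧ b ≠ 0 ∧ Tr b = 0).card
        = if a = 0 then 2 ^ (m - 1) - 1 else 0 := by
      intro a
      by_cases ha0 : a = 0
      · rw [if_pos ha0]
        subst ha0
        have hrw : (univ.filter fun b : F => (0:F) = 0 ∧ b ≠ 0 ∧ Tr b = 0)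
            = (univ.filter fun b : F => Tr ((1:F) * b) = 0).erase 0 := by
          ext z
          simp only [Finset.mem_filter, Finset.mem_erase, Finset.mem_univ, true_and, one_mul]
        rw [hrw, Finset.card_erase_of_mem, card_tr_lin m hm hF one_ne_zero 0]
        simp only [Finset.mem_filter, Finset.mem_univ, true_and, mul_zero, one_mul]
        exact Tr_zero_s14
      · rw [if_neg ha0]
        rw [Finset.card_eq_zero, Finset.filter_eq_empty_iff]
        intro y _
        rintro ⟨hh, -⟩
        exact ha0 hh
    rw [Finset.sum_congr rfl (fun a _ => hstep a)]
    rw [Finset.sum_ite_eq' univ (0:F) (fun _ => 2 ^ (m - 1) - 1)]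
    simp
  refine ⟨?_, hinj, ?_, ?_, ?_, ?_, ?_⟩
  · rw [D1_card m hm hmo hF d, hvD]
  · intro a b hne
    rw [hv1] at *
    exact hmin a b hne
  · have hgoal : (univ.filter fun ab : F × F => wt1 d ab.1 ab.2 = K * (2 ^ m - 3))
        = (univ.filter fun ab : F × F => wt1 d ab.1 ab.2 = K * (4 * K - 3)) := by
      rw [hv1]
    rw [hgoal, hf1, hcountA 0, hvD]
  · have hgoal : (univ.filter fun ab : F × F =>
        wt1 d ab.1 ab.2 = 2 ^ (m - 1) * (2 ^ (m - 1) - 1))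
        = (univ.filter fun ab : F × F => wt1 d ab.1 ab.2 = K * (4 * K - 2)) := by
      rw [hv2]
    rw [hgoal, hf2, hcount2]
  · have hgoal : (univ.filter fun ab : F × F => wt1 d ab.1 ab.2 = K * (2 ^ m - 1))
        = (univ.filter fun ab : F × F => wt1 d ab.1 ab.2 = K * (4 * K - 1)) := by
      rw [hv3]
    rw [hgoal, hf3, hcountA 1, hvD]
  · have hgoal : (univ.filter fun ab : F × F => wt1 d ab.1 ab.2 = 2 ^ (2 * m - 2))
        = (univ.filter fun ab : F × F => wt1 d ab.1 ab.2 = 4 * (K * K)) := by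
      rw [hKK]
    rw [hgoal, hf4, hcount4]
end
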